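/- arXiv:1112.2855 — 5 statements merged into one kernel-verified Lean document; each statement's English description precedes it below -/
import Mathlib

section
/- Let T ∈ G_γ^d, φ ∈ F_β^r, and φ_m be the Galerkin solution of g = Tφ, under the Assumption (1/β and γ non-increasing with limit zero, β_1 = γ_1 = 1, Σ_j [ℓ]_j²/β_j < ∞, Σ_j γ_j < ∞). Then for all m ∈ ℕ: |ℓ(φ − φ_m)|² ≤ 2r·{ Σ_{j>m} [ℓ]_j²/β_j + 2(1 + d⁴)·(γ_m/β_m)·Σ_{j=1}^m [ℓ]_j²/γ_j }. -/
open scoped RealInnerProductSpace Classical ENNReal NNReal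
open Matrix MeasureTheory

noncomputable section

variable {H : Type} [NormedAddCommGroup H] [InnerProductSpace ℝ H] [CompleteSpace H]

/-- Spectral norm of a real matrix (largest singular value). -/
def specNorm {m : ℕ} (A : Matrix (Fin m) (Fin m) ℝ) : ℝ :=
  ‖Matrix.toEuclideanCLM (𝕜 := ℝ) A‖

/-- Galerkin matrix `[T]_m = (⟪ψ_j, T ψ_k⟫)_{1≤j,k≤m}` (0-indexed). -/
def opMat (ψ : HilbertBasis ℕ ℝ H) (T : H →L[ℝ] H) (m : ℕ) :
    Matrix (Fin m) (Fin m) ℝ :=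
  Matrix.of fun j k => ⟪ψ (j : ℕ), T (ψ (k : ℕ))⟫

/-- The ellipsoid `F_β^r`. -/
def memF (ψ : HilbertBasis ℕ ℝ H) (β : ℕ → ℝ) (r : ℝ) (h : H) : Prop :=
  Summable (fun j => β j * ⟪h, ψ j⟫ ^ 2) ∧ (∑' j, β j * ⟪h, ψ j⟫ ^ 2) ≤ r

/-- The class `G_γ^d` of strictly positive nuclear operators with sandwiched norm. -/
def memG (ψ : HilbertBasis ℕ ℝ H) (γ : ℕ → ℝ) (d : ℝ) (T : H →L[ℝ] H) : Prop :=
  (∀ x y : H, ⟪T x, y⟫ = ⟪x, T y⟫) ∧ (∀ h : H, h ≠ 0 → 0 < ⟪T h, h⟫) ∧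
    Summable (fun j => ⟪T (ψ j), ψ j⟫) ∧
    ∀ h : H,
      (d ^ 2)⁻¹ * (∑' j, γ j ^ 2 * ⟪h, ψ j⟫ ^ 2) ≤ ‖T h‖ ^ 2 ∧
      ‖T h‖ ^ 2 ≤ d ^ 2 * (∑' j, γ j ^ 2 * ⟪h, ψ j⟫ ^ 2)

/-- Coefficient vector `[g]_m` of `g = Γ φ`. -/
def gvec (ψ : HilbertBasis ℕ ℝ H) (Γ : H →L[ℝ] H) (φ : H) (m : ℕ) : Fin m → ℝ :=
  fun j => ⟪Γ φ, ψ (j : ℕ)⟫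

/-- Coefficients `[Γ]_m⁻¹ [g]_m` of the Galerkin solution. -/
def galCoef (ψ : HilbertBasis ℕ ℝ H) (Γ : H →L[ℝ] H) (φ : H) (m : ℕ) : Fin m → ℝ :=
  (opMat ψ Γ m)⁻¹ *ᵥ gvec ψ Γ φ m

/-- The Galerkin solution `φ_m`. -/
def galerkin (ψ : HilbertBasis ℕ ℝ H) (Γ : H →L[ℝ] H) (φ : H) (m : ℕ) : H :=
  ∑ j : Fin m, galCoef ψ Γ φ m j • (ψ (j : ℕ))

/-- The linear functional `ℓ(h) = Σ_j ℓ_j ⟨h, ψ_j⟩`. -/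
def ellOf (ψ : HilbertBasis ℕ ℝ H) (lc : ℕ → ℝ) (h : H) : ℝ := ∑' j, lc j * ⟪h, ψ j⟫

/-- `[ℓ]_m`. -/
def ellvec (lc : ℕ → ℝ) (m : ℕ) : Fin m → ℝ := fun j => lc (j : ℕ)

/-- Weighted (squared) norm `‖h‖_w²`. -/
def wnorm2 (ψ : HilbertBasis ℕ ℝ H) (w : ℕ → ℝ) (h : H) : ℝ := ∑' j, w j * ⟪h, ψ j⟫ ^ 2

/-- `V_m^γ = Σ_{j=1}^m ℓ_j²/γ_j`. -/
def Vgam (lc γ : ℕ → ℝ) (m : ℕ) : ℝ := ∑ j ∈ Finset.range m, lc j ^ 2 / γ j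

/-- `V_m = max_{1≤k≤m} [ℓ]_k^t [Γ]_k⁻¹ [ℓ]_k`. -/
def Vmax (ψ : HilbertBasis ℕ ℝ H) (lc : ℕ → ℝ) (Γ : H →L[ℝ] H) (m : ℕ) : ℝ :=
  ⨆ k : Fin m, ellvec lc (k + 1) ⬝ᵥ ((opMat ψ Γ (k + 1))⁻¹ *ᵥ ellvec lc (k + 1))

/-- `σ_m² = 2(σ_Y² + [g]_m^t [Γ]_m⁻¹ [g]_m)` with `σ_Y² = σ² + ⟨Γφ,φ⟩`. -/
def sigmaSqm (ψ : HilbertBasis ℕ ℝ H) (Γ : H →L[ℝ] H) (φ : H) (σ : ℝ) (m : ℕ) : ℝ :=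
  2 * ((σ ^ 2 + ⟪Γ φ, φ⟫) + gvec ψ Γ φ m ⬝ᵥ ((opMat ψ Γ m)⁻¹ *ᵥ gvec ψ Γ φ m))

/-- Theoretical penalty `p_m = 100 σ_m² V_m (1 + log n)/n`. -/
def penTheo (ψ : HilbertBasis ℕ ℝ H) (lc : ℕ → ℝ) (Γ : H →L[ℝ] H) (φ : H) (σ : ℝ)
    (n m : ℕ) : ℝ :=
  100 * sigmaSqm ψ Γ φ σ m * Vmax ψ lc Γ m * ((1 + Real.log n) / n)

/-- `R_m^ℓ[x]` (here `m ≥ 1`; 0-indexed sequences, so `γ_m` is `γ (m-1)`). -/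
def Rml (lc β γ : ℕ → ℝ) (x : ℝ) (m : ℕ) : ℝ :=
  max (∑' j, if m ≤ j then lc j ^ 2 / β j else 0)
    (max (γ (m - 1) / β (m - 1)) x * ∑ j ∈ Finset.range m, lc j ^ 2 / γ j)

/-- `R_*^ℓ[x] = min_{m ≥ 1} R_m^ℓ[x]`. -/
def Rstar (lc β γ : ℕ → ℝ) (x : ℝ) : ℝ := ⨅ m : ℕ, Rml lc β γ x (m + 1)

variable {Ω : Type}

/-- Empirical covariance matrix `[Γ̂]_m`. -/
def hatGam (ψ : HilbertBasis ℕ ℝ H) (n : ℕ) (X : Fin n → Ω → H) (m : ℕ) (ω : Ω) :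
    Matrix (Fin m) (Fin m) ℝ :=
  Matrix.of fun j k => (n : ℝ)⁻¹ * ∑ i, ⟪X i ω, ψ (j : ℕ)⟫ * ⟪X i ω, ψ (k : ℕ)⟫

/-- Empirical vector `[ĝ]_m`. -/
def hatgv (ψ : HilbertBasis ℕ ℝ H) (n : ℕ) (X : Fin n → Ω → H) (Y : Fin n → Ω → ℝ)
    (m : ℕ) (ω : Ω) : Fin m → ℝ :=
  fun j => (n : ℝ)⁻¹ * ∑ i, Y i ω * ⟪X i ω, ψ (j : ℕ)⟫

/-- The thresholded plug-in estimator `ℓ̂_m = ℓ(φ̂_m)`. -/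
def hatell (ψ : HilbertBasis ℕ ℝ H) (lc : ℕ → ℝ) (n : ℕ) (X : Fin n → Ω → H)
    (Y : Fin n → Ω → ℝ) (m : ℕ) (ω : Ω) : ℝ :=
  if IsUnit (hatGam ψ n X m ω).det ∧ specNorm (hatGam ψ n X m ω)⁻¹ ≤ (n : ℝ) then
    ellvec lc m ⬝ᵥ ((hatGam ψ n X m ω)⁻¹ *ᵥ hatgv ψ n X Y m ω)
  else 0

/-- `M_n^ℓ`. -/
def Mln (lc : ℕ → ℝ) (n : ℕ) : ℕ :=
  sSup {m | 1 ≤ m ∧ (m : ℝ) ≤ (n : ℝ) ^ ((1 : ℝ) / 4) ∧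
    (∑ j ∈ Finset.range m, lc j ^ 2) ≤ (n : ℝ)}

/-- Spectral norm of the inverse, `+∞` if singular. -/
def invNormE {m : ℕ} (A : Matrix (Fin m) (Fin m) ℝ) : ℝ≥0∞ :=
  if IsUnit A.det then ENNReal.ofReal (specNorm A⁻¹) else ⊤

/-- Random upper bound `M̂_n`. -/
def Mhat (ψ : HilbertBasis ℕ ℝ H) (lc : ℕ → ℝ) (n : ℕ) (X : Fin n → Ω → H) (ω : Ω) : ℕ :=
  let S := {m | 2 ≤ m ∧ m ≤ Mln lc n ∧
    ENNReal.ofReal ((n : ℝ) / (1 + Real.log n)) <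
      invNormE (hatGam ψ n X m ω) * ENNReal.ofReal (∑ j ∈ Finset.range m, lc j ^ 2)}
  if S.Nonempty then sInf S - 1 else Mln lc n

/-- Deterministic `M_n(a)` (with `a_m = a (m-1)` in 0-indexing). -/
def Mna (lc a : ℕ → ℝ) (n : ℕ) : ℕ :=
  let S := {m | 2 ≤ m ∧ m ≤ Mln lc n ∧
    (n : ℝ) / (1 + Real.log n) < a (m - 1) * ∑ j ∈ Finset.range m, lc j ^ 2}
  if S.Nonempty then sInf S - 1 else Mln lc n

/-- `V̂_m = max_{1≤k≤m} [ℓ]_k^t [Γ̂]_k⁻¹ [ℓ]_k`. -/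
def hatVmax (ψ : HilbertBasis ℕ ℝ H) (lc : ℕ → ℝ) (n : ℕ) (X : Fin n → Ω → H)
    (m : ℕ) (ω : Ω) : ℝ :=
  ⨆ k : Fin m, ellvec lc (k + 1) ⬝ᵥ ((hatGam ψ n X (k + 1) ω)⁻¹ *ᵥ ellvec lc (k + 1))

/-- Stochastic penalty `p̂_m`. -/
def hatpen (ψ : HilbertBasis ℕ ℝ H) (lc : ℕ → ℝ) (n : ℕ) (X : Fin n → Ω → H)
    (Y : Fin n → Ω → ℝ) (m : ℕ) (ω : Ω) : ℝ :=
  700 * (2 * (n : ℝ)⁻¹ * ∑ i, (Y i ω) ^ 2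
      + 2 * (hatgv ψ n X Y m ω ⬝ᵥ ((hatGam ψ n X m ω)⁻¹ *ᵥ hatgv ψ n X Y m ω)))
    * hatVmax ψ lc n X m ω * ((1 + Real.log n) / n)

/-- Contrast `κ_m`. -/
def contrast (ψ : HilbertBasis ℕ ℝ H) (lc : ℕ → ℝ) (n : ℕ) (X : Fin n → Ω → H)
    (Y : Fin n → Ω → ℝ) (m : ℕ) (ω : Ω) : ℝ :=
  sSup {x | ∃ k, m ≤ k ∧ k ≤ Mhat ψ lc n X ω ∧
    x = (hatell ψ lc n X Y k ω - hatell ψ lc n X Y m ω) ^ 2 - hatpen ψ lc n X Y k ω}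

/-- The fully data-driven dimension `m̂` (smallest minimizer of `κ + p̂`). -/
def mhat (ψ : HilbertBasis ℕ ℝ H) (lc : ℕ → ℝ) (n : ℕ) (X : Fin n → Ω → H)
    (Y : Fin n → Ω → ℝ) (ω : Ω) : ℕ :=
  sInf {m | 1 ≤ m ∧ m ≤ Mhat ψ lc n X ω ∧ ∀ k, 1 ≤ k → k ≤ Mhat ψ lc n X ω →
    contrast ψ lc n X Y m ω + hatpen ψ lc n X Y m ω ≤
      contrast ψ lc n X Y k ω + hatpen ψ lc n X Y k ω}

/-- The functional linear model with jointly Gaussian regressor and error,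
observed through an i.i.d. sample of size `n`. -/
structure FLModel [MeasurableSpace H] (ψ : HilbertBasis ℕ ℝ H)
    (σ : ℝ) (φ : H) (Γ : H →L[ℝ] H)
    [MeasurableSpace Ω] (P : Measure Ω) (n : ℕ)
    (X : Fin n → Ω → H) (Y : Fin n → Ω → ℝ) (ε : Fin n → Ω → ℝ) : Prop where
  measX : ∀ i, Measurable (X i)
  measEps : ∀ i, Measurable (ε i)
  modelEq : ∀ i ω, Y i ω = ⟪φ, X i ω⟫ + σ * ε i ω
  indep : ProbabilityTheory.iIndepFun (fun i ω => (X i ω, ε i ω)) P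
  identDistrib : ∀ i j, Measure.map (fun ω => (X i ω, ε i ω)) P
      = Measure.map (fun ω => (X j ω, ε j ω)) P
  centeredX : ∀ i (h : H), ∫ ω, ⟪X i ω, h⟫ ∂P = 0
  sqIntX : ∀ i, Integrable (fun ω => ‖X i ω‖ ^ 2) P
  epsMean : ∀ i, ∫ ω, ε i ω ∂P = 0
  epsVar : ∀ i, ∫ ω, (ε i ω) ^ 2 ∂P = 1
  uncorr : ∀ i (h : H), ∫ ω, ε i ω * ⟪X i ω, h⟫ ∂P = 0
  gaussian : ∀ i (k : ℕ) (hs : Fin k → H) (c : Fin k → ℝ) (c' : ℝ), ∃ v : NNReal,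
      Measure.map (fun ω => (∑ j, c j * ⟪X i ω, hs j⟫) + c' * ε i ω) P
        = ProbabilityTheory.gaussianReal 0 v
  covOp : ∀ i (h h' : H), ⟪Γ h, h'⟫ = ∫ ω, ⟪X i ω, h⟫ * ⟪X i ω, h'⟫ ∂P


/-!
Write `u = φ - φ_m`. Galerkin orthogonality says that `T u` has no coefficients below `m`, so
`⟪T u, u⟫` only sees the tail coefficients of `u`, which are those of `φ`, and `T` acts on `T u`
with size at most `d γ_m`. Cauchy–Schwarz for the positive form `⟪T ·, ·⟫` then gives
`‖T u‖ ≤ d γ_m ‖tail of φ‖ ≤ d γ_m (r / β_m)^{1/2}`. The lower bound defining `G_γ^d` turns this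
into a bound on `∑_{j ≤ m} γ_j² u_j²`, which controls the low-frequency part of `ℓ(u)` by
Cauchy–Schwarz with weights `γ_j`; the high-frequency part is `ℓ` applied to the tail of `φ`,
bounded by Cauchy–Schwarz against the weights `β_j`.
-/

open Finset

theorem Summable.of_sq_le_mul {ι : Type*} {r f g : ι → ℝ} (hf : Summable f) (hg : Summable g)
    (h : ∀ i, r i ^ 2 ≤ f i * g i) : Summable r := by
  refine Summable.of_norm_bounded ((hf.add hg).abs.div_const 2) fun i => ?_
  have : r i ^ 2 ≤ ((f i + g i) / 2) ^ 2 := by nlinarith [h i, sq_nonneg (f i - g i)]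
  simpa [abs_div] using sq_le_sq.mp this

theorem tsum_sq_le_tsum_mul_tsum_of_sq_le_mul {ι : Type*} {r f g : ι → ℝ}
    (hf0 : ∀ i, 0 ≤ f i) (hg0 : ∀ i, 0 ≤ g i) (hf : Summable f) (hg : Summable g)
    (h : ∀ i, r i ^ 2 ≤ f i * g i) : (∑' i, r i) ^ 2 ≤ (∑' i, f i) * ∑' i, g i := by
  have hr := (Summable.of_sq_le_mul hf hg h).hasSum
  refine le_of_tendsto ((continuous_pow 2).continuousAt.tendsto.comp hr)
    (Filter.Eventually.of_forall fun s => ?_)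
  calc (∑ i ∈ s, r i) ^ 2 ≤ (∑ i ∈ s, f i) * ∑ i ∈ s, g i :=
        sum_sq_le_sum_mul_sum_of_sq_le_mul s (fun i _ => hf0 i) (fun i _ => hg0 i) fun i _ => h i
    _ ≤ (∑' i, f i) * ∑' i, g i :=
        mul_le_mul (hf.sum_le_tsum s fun i _ => hf0 i) (hg.sum_le_tsum s fun i _ => hg0 i)
          (sum_nonneg fun i _ => hg0 i) (tsum_nonneg hf0)

theorem tsum_nat_add_eq_of_forall_lt {f : ℕ → ℝ} {m : ℕ} (hf : ∀ j < m, f j = 0) :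
    ∑' j, f (j + m) = ∑' j, f j := by
  by_cases hs : Summable f
  · rw [← hs.sum_add_tsum_nat_add m, sum_eq_zero fun j hj => hf j (mem_range.mp hj), zero_add]
  · rw [tsum_eq_zero_of_not_summable hs,
      tsum_eq_zero_of_not_summable ((summable_nat_add_iff m).not.mpr hs)]

theorem tsum_ite_le_eq_tsum_nat_add (f : ℕ → ℝ) (m : ℕ) :
    (∑' j, if m ≤ j then f j else 0) = ∑' j, f (j + m) := by
  rw [← tsum_nat_add_eq_of_forall_lt (m := m) (f := fun j => if m ≤ j then f j else 0)
    fun j hj => if_neg (by omega)]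
  simp

theorem tsum_nat_add_le_of_nonneg {f : ℕ → ℝ} (hf0 : ∀ j, 0 ≤ f j) (hf : Summable f) (m : ℕ) :
    ∑' j, f (j + m) ≤ ∑' j, f j := by
  rw [← hf.sum_add_tsum_nat_add m]
  exact le_add_of_nonneg_left (sum_nonneg fun j _ => hf0 j)

section InnerProductSpace

variable {E : Type*} [NormedAddCommGroup E] [InnerProductSpace ℝ E]

namespace ContinuousLinearMap.IsPositive

variable {T : E →L[ℝ] E}

theorem inner_map_sq_le (hT : T.IsPositive) (x y : E) :
    ⟪T x, y⟫ ^ 2 ≤ ⟪T x, x⟫ * ⟪T y, y⟫ := by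
  have := LinearMap.BilinForm.apply_mul_apply_le_of_forall_zero_le
    ((innerₗ E).comp (T : E →ₗ[ℝ] E)) hT.inner_nonneg_left x y
  simp only [LinearMap.comp_apply, innerₗ_apply_apply, coe_coe] at this
  rwa [hT.inner_left_eq_inner_right y x, real_inner_comm (T x) y, ← sq] at this

theorem norm_map_sq_le {x : E} {c : ℝ} (hT : T.IsPositive)
    (hc : ⟪T (T x), T x⟫ ≤ c * ‖T x‖ ^ 2) : ‖T x‖ ^ 2 ≤ c * ⟪T x, x⟫ := by
  have hcs := hT.inner_map_sq_le x (T x)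
  rw [real_inner_comm, real_inner_self_eq_norm_sq] at hcs
  have h0 := hT.inner_nonneg_left x
  rcases (sq_nonneg ‖T x‖).eq_or_lt with h | h
  · have hTx : T x = 0 := by simpa using h.symm
    simp [hTx]
  · nlinarith [mul_le_mul_of_nonneg_left hc h0]

end ContinuousLinearMap.IsPositive

namespace HilbertBasis

variable {ι : Type*} (ψ : HilbertBasis ι ℝ E)

theorem inner_eq_tsum (x y : E) : ⟪x, y⟫ = ∑' j, ⟪x, ψ j⟫ * ⟪y, ψ j⟫ := by
  rw [← ψ.tsum_inner_mul_inner x y]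
  exact tsum_congr fun j => by rw [real_inner_comm (ψ j) y]

theorem summable_inner_sq (x : E) : Summable fun j => ⟪x, ψ j⟫ ^ 2 := by
  simpa [sq, real_inner_comm x] using ψ.summable_inner_mul_inner x x

theorem tsum_inner_sq (x : E) : ∑' j, ⟪x, ψ j⟫ ^ 2 = ‖x‖ ^ 2 := by
  simp_rw [sq, ← ψ.inner_eq_tsum, real_inner_self_eq_norm_mul_norm]

theorem inner_sq_le_of_forall_lt (ψ : HilbertBasis ℕ ℝ E) {x : E} {m : ℕ}
    (hx : ∀ j < m, ⟪x, ψ j⟫ = 0) (y : E) :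
    ⟪x, y⟫ ^ 2 ≤ ‖x‖ ^ 2 * ∑' j, ⟪y, ψ (j + m)⟫ ^ 2 := by
  have hxy : ⟪x, y⟫ = ∑' j, ⟪x, ψ (j + m)⟫ * ⟪y, ψ (j + m)⟫ := by
    rw [ψ.inner_eq_tsum]
    exact (tsum_nat_add_eq_of_forall_lt fun j hj => by simp [hx j hj]).symm
  have hx2 : ‖x‖ ^ 2 = ∑' j, ⟪x, ψ (j + m)⟫ ^ 2 := by
    rw [← ψ.tsum_inner_sq]
    exact (tsum_nat_add_eq_of_forall_lt fun j hj => by simp [hx j hj]).symm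
  rw [hxy, hx2]
  exact tsum_sq_le_tsum_mul_tsum_of_sq_le_mul (fun _ => sq_nonneg _) (fun _ => sq_nonneg _)
    ((summable_nat_add_iff m).mpr (ψ.summable_inner_sq x))
    ((summable_nat_add_iff m).mpr (ψ.summable_inner_sq y)) fun j => (mul_pow ..).le

end HilbertBasis

theorem ContinuousLinearMap.IsPositive.norm_map_sq_le_mul_tsum_nat_add {T : E →L[ℝ] E}
    (hT : T.IsPositive) (ψ : HilbertBasis ℕ ℝ E) {u : E} {m : ℕ} {c : ℝ}
    (hu : ∀ j < m, ⟪T u, ψ j⟫ = 0) (hc : ⟪T (T u), T u⟫ ≤ c * ‖T u‖ ^ 2) :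
    ‖T u‖ ^ 2 ≤ c ^ 2 * ∑' j, ⟪u, ψ (j + m)⟫ ^ 2 := by
  have henergy := hT.norm_map_sq_le hc
  have htail := ψ.inner_sq_le_of_forall_lt hu u
  rcases (sq_nonneg ‖T u‖).eq_or_lt with h | h
  · rw [← h]
    exact mul_nonneg (sq_nonneg c) (tsum_nonneg fun _ => sq_nonneg _)
  · refine le_of_mul_le_mul_left ?_ h
    calc ‖T u‖ ^ 2 * ‖T u‖ ^ 2 ≤ (c * ⟪T u, u⟫) ^ 2 := by
          rw [← sq]; exact pow_le_pow_left₀ (sq_nonneg _) henergy 2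
      _ = c ^ 2 * ⟪T u, u⟫ ^ 2 := by ring
      _ ≤ c ^ 2 * (‖T u‖ ^ 2 * ∑' j, ⟪u, ψ (j + m)⟫ ^ 2) := by gcongr
      _ = ‖T u‖ ^ 2 * (c ^ 2 * ∑' j, ⟪u, ψ (j + m)⟫ ^ 2) := by ring

end InnerProductSpace

section Ellipsoid

variable {E : Type} [NormedAddCommGroup E] [InnerProductSpace ℝ E]
  {ψ : HilbertBasis ℕ ℝ E} {β : ℕ → ℝ} {r : ℝ} {φ : E}

theorem memF.radius_nonneg (hφ : memF ψ β r φ) (hβ : ∀ j, 0 ≤ β j) : 0 ≤ r :=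
  (tsum_nonneg fun j => mul_nonneg (hβ j) (sq_nonneg _)).trans hφ.2

theorem memF.tsum_nat_add_le (hφ : memF ψ β r φ) (hβ : ∀ j, 0 ≤ β j) (m : ℕ) :
    ∑' j, β (j + m) * ⟪φ, ψ (j + m)⟫ ^ 2 ≤ r :=
  (tsum_nat_add_le_of_nonneg (fun j => mul_nonneg (hβ j) (sq_nonneg _)) hφ.1 m).trans hφ.2

theorem memF.mul_tsum_inner_sq_nat_add_le (hφ : memF ψ β r φ) (hβ0 : ∀ j, 0 ≤ β j)
    (hβ : Monotone β) {k m : ℕ} (hkm : k ≤ m) :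
    β k * ∑' j, ⟪φ, ψ (j + m)⟫ ^ 2 ≤ r := by
  rw [← tsum_mul_left]
  refine (Summable.tsum_le_tsum (fun j => ?_)
    (((summable_nat_add_iff m).mpr (ψ.summable_inner_sq φ)).mul_left _)
    ((summable_nat_add_iff m).mpr hφ.1)).trans (hφ.tsum_nat_add_le hβ0 m)
  exact mul_le_mul_of_nonneg_right (hβ (by omega)) (sq_nonneg _)

theorem memF.summable_mul_inner (hφ : memF ψ β r φ) (hβ : ∀ j, 0 < β j) {lc : ℕ → ℝ}
    (hl : Summable fun j => lc j ^ 2 / β j) : Summable fun j => lc j * ⟪φ, ψ j⟫ :=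
  Summable.of_sq_le_mul hl hφ.1 fun j => le_of_eq (by field_simp [(hβ j).ne'])

theorem memF.sq_tsum_nat_add_le (hφ : memF ψ β r φ) (hβ : ∀ j, 0 < β j) {lc : ℕ → ℝ}
    (hl : Summable fun j => lc j ^ 2 / β j) (m : ℕ) :
    (∑' j, lc (j + m) * ⟪φ, ψ (j + m)⟫) ^ 2 ≤ (∑' j, lc (j + m) ^ 2 / β (j + m)) * r := by
  have hl0 : ∀ j, 0 ≤ lc (j + m) ^ 2 / β (j + m) := fun j => div_nonneg (sq_nonneg _) (hβ _).le
  have hcs := tsum_sq_le_tsum_mul_tsum_of_sq_le_mul hl0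
    (fun j => mul_nonneg (hβ (j + m)).le (sq_nonneg ⟪φ, ψ (j + m)⟫))
    ((summable_nat_add_iff (f := fun j => lc j ^ 2 / β j) m).mpr hl)
    ((summable_nat_add_iff (f := fun j => β j * ⟪φ, ψ j⟫ ^ 2) m).mpr hφ.1)
    (r := fun j => lc (j + m) * ⟪φ, ψ (j + m)⟫)
    fun j => le_of_eq (by field_simp [(hβ (j + m)).ne'])
  exact hcs.trans
    (mul_le_mul_of_nonneg_left (hφ.tsum_nat_add_le (fun j => (hβ j).le) m) (tsum_nonneg hl0))

end Ellipsoid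

section SandwichedOperators

variable {E : Type} [NormedAddCommGroup E] [InnerProductSpace ℝ E]
  {ψ : HilbertBasis ℕ ℝ E} {γ : ℕ → ℝ} {d : ℝ} {T : E →L[ℝ] E}

theorem memG.isPositive (hT : memG ψ γ d T) : T.IsPositive := by
  refine (T.isPositive_iff).mpr ⟨hT.1, fun h => ?_⟩
  rcases eq_or_ne h 0 with rfl | h0
  · simp
  · exact (hT.2.1 h h0).le

theorem memG.norm_map_sq_le (hT : memG ψ γ d T) (hγ : ∀ j, 0 ≤ γ j) {c : ℝ} {v : E}
    (hv : ∀ j, ⟪v, ψ j⟫ ≠ 0 → γ j ≤ c) : ‖T v‖ ^ 2 ≤ d ^ 2 * c ^ 2 * ‖v‖ ^ 2 := by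
  have hle : ∀ j, γ j ^ 2 * ⟪v, ψ j⟫ ^ 2 ≤ c ^ 2 * ⟪v, ψ j⟫ ^ 2 := fun j => by
    by_cases h : ⟪v, ψ j⟫ = 0
    · simp [h]
    · exact mul_le_mul_of_nonneg_right (pow_le_pow_left₀ (hγ j) (hv j h) 2) (sq_nonneg _)
  have hsum := (ψ.summable_inner_sq v).mul_left (c ^ 2)
  calc ‖T v‖ ^ 2 ≤ d ^ 2 * ∑' j, γ j ^ 2 * ⟪v, ψ j⟫ ^ 2 := (hT.2.2.2 v).2
    _ ≤ d ^ 2 * ∑' j, c ^ 2 * ⟪v, ψ j⟫ ^ 2 := mul_le_mul_of_nonneg_left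
        ((hsum.of_nonneg_of_le (fun j => by positivity) hle).tsum_le_tsum hle hsum) (sq_nonneg d)
    _ = d ^ 2 * c ^ 2 * ‖v‖ ^ 2 := by rw [tsum_mul_left, ψ.tsum_inner_sq, mul_assoc]

theorem memG.inner_map_self_le (hT : memG ψ γ d T) (hγ : ∀ j, 0 ≤ γ j) (hd : 0 ≤ d)
    {c : ℝ} (hc : 0 ≤ c) {v : E} (hv : ∀ j, ⟪v, ψ j⟫ ≠ 0 → γ j ≤ c) :
    ⟪T v, v⟫ ≤ d * c * ‖v‖ ^ 2 := by
  have hnorm : ‖T v‖ ≤ d * c * ‖v‖ :=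
    (pow_le_pow_iff_left₀ (norm_nonneg _) (by positivity) two_ne_zero).mp
      ((hT.norm_map_sq_le hγ hv).trans_eq (by ring))
  calc ⟪T v, v⟫ ≤ ‖T v‖ * ‖v‖ := real_inner_le_norm _ _
    _ ≤ d * c * ‖v‖ * ‖v‖ := by gcongr
    _ = d * c * ‖v‖ ^ 2 := by ring

theorem memG.sq_sum_range_le (hT : memG ψ γ d T) (hd : d ≠ 0) (hγ : ∀ j, 0 < γ j)
    (hγa : Antitone γ) (c : ℕ → ℝ) (h : E) (m : ℕ) :
    (∑ j ∈ range m, c j * ⟪h, ψ j⟫) ^ 2 ≤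
      (∑ j ∈ range m, c j ^ 2 / γ j) * (d ^ 2 * ‖T h‖ ^ 2 / γ (m - 1)) := by
  have hsummable : Summable fun j => γ j ^ 2 * ⟪h, ψ j⟫ ^ 2 :=
    ((ψ.summable_inner_sq h).mul_left (γ 0 ^ 2)).of_nonneg_of_le (fun j => by positivity)
      fun j => mul_le_mul_of_nonneg_right
        (pow_le_pow_left₀ (hγ j).le (hγa (Nat.zero_le j)) 2) (sq_nonneg _)
  have hlower : ∑ j ∈ range m, γ j ^ 2 * ⟪h, ψ j⟫ ^ 2 ≤ d ^ 2 * ‖T h‖ ^ 2 :=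
    (hsummable.sum_le_tsum _ fun j _ => by positivity).trans
      ((inv_mul_le_iff₀ (by positivity)).mp (hT.2.2.2 h).1)
  calc (∑ j ∈ range m, c j * ⟪h, ψ j⟫) ^ 2
      ≤ (∑ j ∈ range m, c j ^ 2 / γ j) * ∑ j ∈ range m, γ j ^ 2 * ⟪h, ψ j⟫ ^ 2 / γ (m - 1) := by
        refine sum_sq_le_sum_mul_sum_of_sq_le_mul _ (fun j _ => div_nonneg (sq_nonneg _) (hγ j).le)
          (fun j _ => div_nonneg (by positivity) (hγ _).le) fun j hj => ?_
        have hj' : γ (m - 1) ≤ γ j := hγa (by have := mem_range.mp hj; omega)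
        rw [div_mul_div_comm, le_div_iff₀ (mul_pos (hγ j) (hγ (m - 1)))]
        calc (c j * ⟪h, ψ j⟫) ^ 2 * (γ j * γ (m - 1))
            ≤ (c j * ⟪h, ψ j⟫) ^ 2 * γ j * γ j := by
              rw [← mul_assoc]
              exact mul_le_mul_of_nonneg_left hj' (mul_nonneg (sq_nonneg _) (hγ j).le)
          _ = c j ^ 2 * (γ j ^ 2 * ⟪h, ψ j⟫ ^ 2) := by ring
    _ ≤ _ := by
        rw [← sum_div]
        have := hγ (m - 1)
        gcongr
        exact (sum_nonneg fun j _ => div_nonneg (sq_nonneg _) (hγ j).le)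

end SandwichedOperators

section Galerkin

variable {E : Type} [NormedAddCommGroup E] [InnerProductSpace ℝ E]
  (ψ : HilbertBasis ℕ ℝ E) (T : E →L[ℝ] E) {m : ℕ}

theorem opMat_mulVec_apply (x : Fin m → ℝ) (j : Fin m) :
    (opMat ψ T m *ᵥ x) j = ⟪ψ j, T (∑ k : Fin m, x k • ψ k)⟫ := by
  simp only [mulVec, dotProduct, opMat, of_apply, map_sum, map_smul, inner_sum,
    real_inner_smul_right, mul_comm]

theorem opMat_posDef (hsym : ∀ x y : E, ⟪T x, y⟫ = ⟪x, T y⟫)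
    (hpos : ∀ h : E, h ≠ 0 → 0 < ⟪T h, h⟫) : (opMat ψ T m).PosDef := by
  have hψ : Orthonormal ℝ fun k : Fin m => ψ k := ψ.orthonormal.comp _ Fin.val_injective
  refine posDef_iff_dotProduct_mulVec.mpr ⟨?_, fun x hx => ?_⟩
  · ext j k
    simp only [conjTranspose_apply, opMat, of_apply, star_trivial]
    rw [← hsym, real_inner_comm]
  · have hne : ∑ k : Fin m, x k • ψ k ≠ 0 := fun h0 =>
      hx (funext fun j => by simpa [h0] using (hψ.inner_right_fintype x j).symm)
    simp only [star_trivial, dotProduct, opMat_mulVec_apply, ← real_inner_smul_left, ← sum_inner]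
    rw [real_inner_comm]
    exact hpos _ hne

variable (φ : E)

theorem inner_galerkin_of_le {j : ℕ} (hj : m ≤ j) : ⟪galerkin ψ T φ m, ψ j⟫ = 0 := by
  rw [galerkin, sum_inner]
  refine sum_eq_zero fun k _ => ?_
  rw [real_inner_smul_left, ψ.orthonormal.inner_eq_zero (by omega), mul_zero]

theorem inner_map_sub_galerkin_of_lt (hsym : ∀ x y : E, ⟪T x, y⟫ = ⟪x, T y⟫)
    (hpos : ∀ h : E, h ≠ 0 → 0 < ⟪T h, h⟫) {j : ℕ} (hj : j < m) :
    ⟪T (φ - galerkin ψ T φ m), ψ j⟫ = 0 := by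
  have hsolve : opMat ψ T m *ᵥ galCoef ψ T φ m = gvec ψ T φ m := by
    rw [galCoef, mulVec_mulVec, mul_nonsing_inv _ (opMat_posDef ψ T hsym hpos).det_pos.ne'.isUnit,
      one_mulVec]
  have := congrFun hsolve ⟨j, hj⟩
  rw [opMat_mulVec_apply, real_inner_comm] at this
  rw [map_sub, inner_sub_left, galerkin, this, gvec, sub_self]

end Galerkin

section GalerkinError

variable {E : Type} [NormedAddCommGroup E] [InnerProductSpace ℝ E]
  (ψ : HilbertBasis ℕ ℝ E) (T : E →L[ℝ] E) (φ : E) {m : ℕ}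

theorem inner_sub_galerkin_nat_add (j : ℕ) :
    ⟪φ - galerkin ψ T φ m, ψ (j + m)⟫ = ⟪φ, ψ (j + m)⟫ := by
  rw [inner_sub_left, inner_galerkin_of_le ψ T φ (by omega), sub_zero]

theorem ellOf_sub_galerkin {lc : ℕ → ℝ} (hs : Summable fun j => lc j * ⟪φ, ψ j⟫) :
    ellOf ψ lc (φ - galerkin ψ T φ m) = ∑ j ∈ range m, lc j * ⟪φ - galerkin ψ T φ m, ψ j⟫
      + ∑' j, lc (j + m) * ⟪φ, ψ (j + m)⟫ := by
  have hs' : Summable fun j => lc j * ⟪φ - galerkin ψ T φ m, ψ j⟫ :=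
    (summable_nat_add_iff m).mp <| by
      simpa only [inner_sub_galerkin_nat_add] using (summable_nat_add_iff m).mpr hs
  rw [ellOf, ← hs'.sum_add_tsum_nat_add m]
  simp only [inner_sub_galerkin_nat_add]

variable {γ : ℕ → ℝ} {d : ℝ}

theorem memG.norm_map_sub_galerkin_sq_le (hT : memG ψ γ d T) (hd : 0 ≤ d)
    (hγ : ∀ j, 0 ≤ γ j) (hγa : Antitone γ) :
    ‖T (φ - galerkin ψ T φ m)‖ ^ 2 ≤ (d * γ (m - 1)) ^ 2 * ∑' j, ⟪φ, ψ (j + m)⟫ ^ 2 := by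
  have horth : ∀ j < m, ⟪T (φ - galerkin ψ T φ m), ψ j⟫ = 0 :=
    fun j => inner_map_sub_galerkin_of_lt ψ T φ hT.1 hT.2.1
  have hform := hT.inner_map_self_le hγ hd (hγ (m - 1)) fun j hj =>
    hγa (by by_contra h; exact hj (horth j (by omega)))
  simpa only [inner_sub_galerkin_nat_add] using
    hT.isPositive.norm_map_sq_le_mul_tsum_nat_add ψ horth hform

theorem memG.sq_sum_range_sub_galerkin_le (hT : memG ψ γ d T) (hd : 0 < d)
    (hγ : ∀ j, 0 < γ j) (hγa : Antitone γ) (lc : ℕ → ℝ) :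
    (∑ j ∈ range m, lc j * ⟪φ - galerkin ψ T φ m, ψ j⟫) ^ 2 ≤
      (∑ j ∈ range m, lc j ^ 2 / γ j) * (d ^ 4 * γ (m - 1) * ∑' j, ⟪φ, ψ (j + m)⟫ ^ 2) := by
  refine (hT.sq_sum_range_le hd.ne' hγ hγa lc _ m).trans
    (mul_le_mul_of_nonneg_left ?_ (sum_nonneg fun j _ => div_nonneg (sq_nonneg _) (hγ j).le))
  rw [div_le_iff₀ (hγ (m - 1))]
  calc d ^ 2 * ‖T (φ - galerkin ψ T φ m)‖ ^ 2
      ≤ d ^ 2 * ((d * γ (m - 1)) ^ 2 * ∑' j, ⟪φ, ψ (j + m)⟫ ^ 2) := by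
        gcongr
        exact hT.norm_map_sub_galerkin_sq_le ψ T φ hd.le (fun j => (hγ j).le) hγa
    _ = _ := by ring

end GalerkinError

theorem stmt_9_general (ψ : HilbertBasis ℕ ℝ H) (γ : ℕ → ℝ) (d : ℝ) (hd : 1 ≤ d)
    (hγpos : ∀ j, 0 < γ j) (hγanti : Antitone γ)
    (β : ℕ → ℝ) (hβ1 : β 0 = 1) (hβmono : Monotone β) (r : ℝ)
    (lc : ℕ → ℝ) (hlβ : Summable (fun j => lc j ^ 2 / β j))
    (T : H →L[ℝ] H) (hT : memG ψ γ d T)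
    (φ : H) (hφ : memF ψ β r φ) :
    ∀ m : ℕ, 1 ≤ m →
      (ellOf ψ lc (φ - galerkin ψ T φ m)) ^ 2 ≤
        2 * r * ((∑' j, if m ≤ j then lc j ^ 2 / β j else 0)
          + 2 * (1 + d ^ 4) * (γ (m - 1) / β (m - 1)) *
              ∑ j ∈ Finset.range m, lc j ^ 2 / γ j) := by
  intro m _
  have hβpos : ∀ j, 0 < β j := fun j => zero_lt_one.trans_le (hβ1 ▸ hβmono j.zero_le)
  have hd0 : 0 < d := zero_lt_one.trans_le hd
  have hV : 0 ≤ ∑ j ∈ range m, lc j ^ 2 / γ j :=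
    sum_nonneg fun j _ => div_nonneg (sq_nonneg _) (hγpos j).le
  have hr := hφ.radius_nonneg fun j => (hβpos j).le
  have hlow := hT.sq_sum_range_sub_galerkin_le ψ T φ hd0 hγpos hγanti lc (m := m)
  have hhigh := hφ.sq_tsum_nat_add_le hβpos hlβ m
  have htail : ∑' j, ⟪φ, ψ (j + m)⟫ ^ 2 ≤ r / β (m - 1) := by
    rw [le_div_iff₀ (hβpos _), mul_comm]
    exact hφ.mul_tsum_inner_sq_nat_add_le (fun j => (hβpos j).le) hβmono (Nat.sub_le m 1)
  have hlow_tail := mul_le_mul_of_nonneg_left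
    (mul_le_mul_of_nonneg_left htail (mul_nonneg (pow_nonneg hd0.le 4) (hγpos (m - 1)).le)) hV
  -- the argument yields the constant `d ^ 4`; `hgap` is its slack against `2 * (1 + d ^ 4)`
  have hgap : 0 ≤ (∑ j ∈ range m, lc j ^ 2 / γ j) * (γ (m - 1) / β (m - 1)) * r * (4 + 2 * d ^ 4) :=
    mul_nonneg (mul_nonneg (mul_nonneg hV (div_nonneg (hγpos _).le (hβpos _).le)) hr)
      (by positivity)
  rw [ellOf_sub_galerkin ψ T φ (hφ.summable_mul_inner hβpos hlβ), tsum_ite_le_eq_tsum_nat_add]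
  refine (add_sq_le ..).trans ?_
  linear_combination 2 * hlow + 2 * hhigh + 2 * hlow_tail + hgap

/-- Lemma B.1, (B.6): bias bound `|ℓ(φ − φ_m)|² ≤ 2r {tail + 2(1+d⁴)(γ_m/β_m)Σ}`. -/
theorem stmt_9 (ψ : HilbertBasis ℕ ℝ H) (γ : ℕ → ℝ) (d : ℝ) (hd : 1 ≤ d)
    (hγ1 : γ 0 = 1) (hγpos : ∀ j, 0 < γ j) (hγanti : Antitone γ)
    (hγ0 : Filter.Tendsto γ Filter.atTop (nhds 0)) (hγsum : Summable γ)
    (β : ℕ → ℝ) (hβ1 : β 0 = 1) (hβmono : Monotone β)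
    (hβ0 : Filter.Tendsto (fun j => (β j)⁻¹) Filter.atTop (nhds 0)) (r : ℝ) (hr : 0 < r)
    (lc : ℕ → ℝ) (hl1 : lc 0 = 1) (hlβ : Summable (fun j => lc j ^ 2 / β j))
    (T : H →L[ℝ] H) (hT : memG ψ γ d T)
    (φ : H) (hφ : memF ψ β r φ) :
    ∀ m : ℕ, 1 ≤ m →
      (ellOf ψ lc (φ - galerkin ψ T φ m)) ^ 2 ≤
        2 * r * ((∑' j, if m ≤ j then lc j ^ 2 / β j else 0)
          + 2 * (1 + d ^ 4) * (γ (m - 1) / β (m - 1)) *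
              ∑ j ∈ Finset.range m, lc j ^ 2 / γ j) :=
  stmt_9_general ψ γ d hd hγpos hγanti β hβ1 hβmono r lc hlβ T hT φ hφ
end
end

section
/- Let Γ ∈ G_γ^d under the Assumption, and set D := 4d³. Define V_m := max_{1≤k≤m} [ℓ]_k^t[Γ]_k^{−1}[ℓ]_k and V_m^γ := Σ_{j=1}^m [ℓ]_j²/γ_j. Then for all m ≥ 1: d^{−1} ≤ V_m/V_m^γ ≤ D; d^{−1} ≤ γ_m·‖[Γ]_m^{−1}‖ ≤ D; and d^{−1} ≤ γ_m·max_{1≤k≤m}‖[Γ]_k^{−1}‖ ≤ D, where ‖·‖ is the spectral norm. -/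
open scoped RealInnerProductSpace Classical ENNReal NNReal
open Matrix MeasureTheory

noncomputable section

variable {H : Type} [NormedAddCommGroup H] [InnerProductSpace ℝ H] [CompleteSpace H]

variable {Ω : Type}

/-!
Write `M = [Γ]_m` and `D = diag(γ_1, …, γ_m)`. Membership in `G_γ^d` says `D² ≤ d² Γ²` and
`Γ² ≤ d² D²` as quadratic forms on `H`, and the Löwner–Heinz inequality (`A² ≤ B²` with `B ≥ 0`
implies `A ≤ B`) turns this into `M ≤ d D` and `D ≤ d M`. For `M ≤ d D`, Bessel's inequality
`‖M v‖ ≤ ‖Γ h‖` lets Heinz be applied to `M` directly. For `D ≤ d M` Bessel points the wrong way,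
so Heinz is applied to `d [Γ]_N` plus a multiple of the identity that accounts for the
coordinates of `Γ h` beyond `N`; the multiple tends to zero as `N → ∞` because `γ` is
square-summable.
Inverting gives `d⁻¹ D⁻¹ ≤ M⁻¹ ≤ d D⁻¹`, which compares `V_m` with `V_m^γ`. Since
`γ_m ≤ D ≤ d M`, `‖M⁻¹‖ ≤ d / γ_m`, and `‖M e_m‖ ≤ ‖Γ ψ_m‖ ≤ d γ_m` gives `‖M⁻¹‖ ≥ (d γ_m)⁻¹`.
The maxima over `k ≤ m` follow because `V_k^γ` increases and `γ_k` decreases in `k`.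
-/

open Filter Topology

namespace Matrix

variable {ι : Type*} [Fintype ι]

theorem IsHermitian.dotProduct_mulVec_comm {A : Matrix ι ι ℝ} (hA : A.IsHermitian)
    (x y : ι → ℝ) : x ⬝ᵥ (A *ᵥ y) = y ⬝ᵥ (A *ᵥ x) := by
  rw [dotProduct_mulVec, ← mulVec_transpose, ← conjTranspose_eq_transpose_of_trivial, hA,
    dotProduct_comm]

/-- Löwner–Heinz for the square root: `A² ≤ B²` with `B ≥ 0` gives `A ≤ B`. -/
theorem dotProduct_mulVec_le_of_mulVec_dotProduct_le {A B : Matrix ι ι ℝ} (hA : A.IsHermitian)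
    (hB : B.PosSemidef) (h : ∀ v, (A *ᵥ v) ⬝ᵥ (A *ᵥ v) ≤ (B *ᵥ v) ⬝ᵥ (B *ᵥ v)) (v : ι → ℝ) :
    v ⬝ᵥ (A *ᵥ v) ≤ v ⬝ᵥ (B *ᵥ v) := by
  classical
  have hBA : (B - A).IsHermitian := hB.1.sub hA
  suffices (B - A).PosSemidef by
    simpa [sub_mulVec] using this.dotProduct_mulVec_nonneg v
  refine hBA.posSemidef_iff_eigenvalues_nonneg.mpr fun i => le_of_not_gt fun (hμ : _ < 0) => ?_
  set μ := hBA.eigenvalues i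
  set e : ι → ℝ := WithLp.ofLp (hBA.eigenvectorBasis i)
  have he : e ⬝ᵥ e = 1 := by
    have := hBA.eigenvectorBasis.inner_eq_one i
    rwa [EuclideanSpace.inner_eq_star_dotProduct, star_trivial] at this
  -- `A e = B e - μ e` with `μ < 0` makes `A e` strictly longer than `B e`.
  have hAe : A *ᵥ e = B *ᵥ e - μ • e := by
    rw [← hBA.mulVec_eigenvectorBasis i, sub_mulVec, sub_sub_cancel]
  have := h e
  rw [hAe] at this
  simp only [sub_dotProduct, dotProduct_sub, smul_dotProduct, dotProduct_smul, smul_eq_mul,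
    he, dotProduct_comm (B *ᵥ e) e] at this
  have hBe : 0 ≤ e ⬝ᵥ (B *ᵥ e) := by simpa using hB.dotProduct_mulVec_nonneg e
  nlinarith

/-- `u ⬝ A⁻¹ u` is the maximum of `2 x ⬝ u - x ⬝ A x`, attained at `x = A⁻¹ u`. -/
theorem two_mul_dotProduct_sub_le_dotProduct_inv_mulVec [DecidableEq ι] {A : Matrix ι ι ℝ}
    (hA : A.PosSemidef) (hdet : IsUnit A.det) (x u : ι → ℝ) :
    2 * (x ⬝ᵥ u) - x ⬝ᵥ (A *ᵥ x) ≤ u ⬝ᵥ (A⁻¹ *ᵥ u) := by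
  set y := A⁻¹ *ᵥ u
  have hy : A *ᵥ y = u := by rw [mulVec_mulVec, mul_nonsing_inv A hdet, one_mulVec]
  have h := hA.dotProduct_mulVec_nonneg (x - y)
  simp only [star_trivial, mulVec_sub, sub_dotProduct, dotProduct_sub, hy] at h
  rw [hA.1.dotProduct_mulVec_comm y x, hy, dotProduct_comm y u] at h
  linarith

theorem two_mul_dotProduct_sub_sum_mul_sq_le {w : ι → ℝ} (hw : ∀ j, 0 < w j) (x u : ι → ℝ) :
    2 * (x ⬝ᵥ u) - ∑ j, w j * x j ^ 2 ≤ ∑ j, u j ^ 2 / w j := by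
  rw [dotProduct, Finset.mul_sum, ← Finset.sum_sub_distrib]
  refine Finset.sum_le_sum fun j _ => ?_
  rw [le_div_iff₀ (hw j)]
  nlinarith [sq_nonneg (w j * x j - u j)]

end Matrix

theorem EuclideanSpace.norm_toLp_sq {ι : Type*} [Fintype ι] (v : ι → ℝ) :
    ‖WithLp.toLp 2 v‖ ^ 2 = v ⬝ᵥ v := by
  rw [← real_inner_self_eq_norm_sq, EuclideanSpace.inner_toLp_toLp, star_trivial]

theorem specNorm_inv_le {m : ℕ} {A : Matrix (Fin m) (Fin m) ℝ} (hdet : IsUnit A.det) {c : ℝ}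
    (hc : 0 < c) (h : ∀ v, c * (v ⬝ᵥ v) ≤ v ⬝ᵥ (A *ᵥ v)) : specNorm A⁻¹ ≤ c⁻¹ := by
  refine ContinuousLinearMap.opNorm_le_bound _ (inv_nonneg.mpr hc.le) fun x => ?_
  set y := Matrix.toEuclideanCLM (𝕜 := ℝ) A⁻¹ x
  have hy : A *ᵥ WithLp.ofLp y = WithLp.ofLp x := by
    simp [y, Matrix.mulVec_mulVec, Matrix.mul_nonsing_inv A hdet]
  -- coercivity and Cauchy–Schwarz: `c ‖y‖² ≤ ⟪y, A y⟫ = ⟪y, x⟫ ≤ ‖y‖ ‖x‖`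
  have h1 : c * ‖y‖ ^ 2 ≤ ‖y‖ * ‖x‖ := by
    have := h (WithLp.ofLp y)
    rw [hy] at this
    calc c * ‖y‖ ^ 2 = c * (WithLp.ofLp y ⬝ᵥ WithLp.ofLp y) := by
          rw [← real_inner_self_eq_norm_sq, EuclideanSpace.inner_eq_star_dotProduct, star_trivial]
      _ ≤ ⟪y, x⟫ := by
          rw [EuclideanSpace.inner_eq_star_dotProduct, star_trivial]
          exact this.trans_eq (dotProduct_comm _ _)
      _ ≤ ‖y‖ * ‖x‖ := real_inner_le_norm y x
  rw [inv_mul_eq_div, le_div_iff₀ hc]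
  rcases (norm_nonneg y).eq_or_lt with h0 | hpos
  · rw [← h0, zero_mul]
    exact norm_nonneg x
  · exact le_of_mul_le_mul_left (by linarith) hpos

theorem norm_le_specNorm_inv_mul {m : ℕ} {A : Matrix (Fin m) (Fin m) ℝ} (hdet : IsUnit A.det)
    (v : Fin m → ℝ) :
    ‖WithLp.toLp 2 v‖ ≤ specNorm A⁻¹ * ‖WithLp.toLp 2 (A *ᵥ v)‖ := by
  have := (Matrix.toEuclideanCLM (𝕜 := ℝ) A⁻¹).le_opNorm (WithLp.toLp 2 (A *ᵥ v))
  rwa [Matrix.toEuclideanCLM_toLp, Matrix.mulVec_mulVec, Matrix.nonsing_inv_mul A hdet,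
    Matrix.one_mulVec] at this

theorem le_iSup_fin_succ (f : ℕ → ℝ) (n : ℕ) : f (n + 1) ≤ ⨆ k : Fin (n + 1), f (k + 1) :=
  le_ciSup (f := fun k : Fin (n + 1) => f (k + 1)) (Set.finite_range _).bddAbove (Fin.last n)

theorem sum_ellvec_sq_div (lc γ : ℕ → ℝ) (k : ℕ) :
    ∑ j : Fin k, ellvec lc k j ^ 2 / γ j = Vgam lc γ k :=
  Fin.sum_univ_eq_sum_range (fun j => lc j ^ 2 / γ j) k

theorem Vgam_mono {lc γ : ℕ → ℝ} (hγ : ∀ j, 0 < γ j) : Monotone (Vgam lc γ) := fun _ _ hab =>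
  Finset.sum_le_sum_of_subset_of_nonneg (Finset.range_subset_range.mpr hab)
    fun j _ _ => div_nonneg (sq_nonneg _) (hγ j).le

theorem Vgam_pos {lc γ : ℕ → ℝ} (hγ : ∀ j, 0 < γ j) (hl : lc 0 ≠ 0) (n : ℕ) :
    0 < Vgam lc γ (n + 1) :=
  Finset.sum_pos' (fun j _ => div_nonneg (sq_nonneg _) (hγ j).le)
    ⟨0, by simp, div_pos (by positivity) (hγ 0)⟩

section

omit [CompleteSpace H]

theorem HilbertBasis.hasSum_inner_sq (ψ : HilbertBasis ℕ ℝ H) (x : H) :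
    HasSum (fun j => ⟪x, ψ j⟫ ^ 2) (‖x‖ ^ 2) := by
  simpa [← sq, real_inner_comm x] using ψ.hasSum_inner_mul_inner x x

section

variable (ψ : HilbertBasis ℕ ℝ H)

def finCombination {N : ℕ} (v : Fin N → ℝ) : H := ∑ j, v j • ψ j

theorem inner_finCombination_basis {N : ℕ} (v : Fin N → ℝ) (k : ℕ) :
    ⟪finCombination ψ v, ψ k⟫ = if h : k < N then v ⟨k, h⟩ else 0 := by
  simp only [finCombination, sum_inner, real_inner_smul_left,
    orthonormal_iff_ite.mp ψ.orthonormal]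
  split_ifs with h
  · rw [Finset.sum_eq_single ⟨k, h⟩] <;> simp +contextual [Fin.ext_iff, eq_comm]
  · exact Finset.sum_eq_zero fun j _ => by simp [show (j : ℕ) ≠ k by omega]

theorem norm_finCombination_sq {N : ℕ} (v : Fin N → ℝ) :
    ‖finCombination ψ v‖ ^ 2 = v ⬝ᵥ v := by
  rw [← real_inner_self_eq_norm_sq]
  exact (ψ.orthonormal.comp _ Fin.val_injective).inner_sum v v Finset.univ

theorem finCombination_append_zero {m k : ℕ} (v : Fin m → ℝ) :
    finCombination ψ (Fin.append v (0 : Fin k → ℝ)) = finCombination ψ v := by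
  simp [finCombination, Fin.sum_univ_add]

theorem finCombination_single {N : ℕ} (i : Fin N) :
    finCombination ψ (Pi.single i 1) = ψ i := by
  simp [finCombination, Pi.single_apply]

theorem wnorm2_finCombination (w : ℕ → ℝ) {N : ℕ} (v : Fin N → ℝ) :
    wnorm2 ψ w (finCombination ψ v) = ∑ j : Fin N, w j * v j ^ 2 := by
  rw [wnorm2, tsum_eq_sum (s := Finset.range N), ← Fin.sum_univ_eq_sum_range]
  · simp [inner_finCombination_basis]
  · intro k hk
    simp [inner_finCombination_basis, Finset.mem_range.not.mp hk]

variable (T : H →L[ℝ] H)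

theorem opMat_mulVec_apply_s10 {N : ℕ} (v : Fin N → ℝ) (i : Fin N) :
    (opMat ψ T N *ᵥ v) i = ⟪ψ i, T (finCombination ψ v)⟫ := by
  simp [opMat, finCombination, Matrix.mulVec, dotProduct, inner_sum, real_inner_smul_right,
    mul_comm]

theorem dotProduct_opMat_mulVec {N : ℕ} (w v : Fin N → ℝ) :
    w ⬝ᵥ (opMat ψ T N *ᵥ v) = ⟪finCombination ψ w, T (finCombination ψ v)⟫ := by
  simp [dotProduct, opMat_mulVec_apply_s10, finCombination, sum_inner, real_inner_smul_left]

theorem opMat_mulVec_dotProduct_self_le {N : ℕ} (v : Fin N → ℝ) :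
    (opMat ψ T N *ᵥ v) ⬝ᵥ (opMat ψ T N *ᵥ v) ≤ ‖T (finCombination ψ v)‖ ^ 2 := by
  simpa [dotProduct, opMat_mulVec_apply_s10, ← sq] using
    (ψ.orthonormal.comp _ Fin.val_injective).sum_inner_products_le
      (x := T (finCombination ψ v)) (s := Finset.univ)

end

namespace memG

variable {ψ : HilbertBasis ℕ ℝ H} {γ : ℕ → ℝ} {d : ℝ} {Γ : H →L[ℝ] H}

theorem opMat_isHermitian (hΓ : memG ψ γ d Γ) (N : ℕ) : (opMat ψ Γ N).IsHermitian :=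
  Matrix.ext fun i j => by
    simp only [Matrix.conjTranspose_apply, star_trivial, opMat, Matrix.of_apply]
    rw [real_inner_comm, hΓ.1]

theorem opMat_posDef (hΓ : memG ψ γ d Γ) (N : ℕ) : (opMat ψ Γ N).PosDef := by
  refine Matrix.PosDef.of_dotProduct_mulVec_pos (hΓ.opMat_isHermitian N) fun v hv => ?_
  have hcomb : finCombination ψ v ≠ 0 := fun h0 => hv <| dotProduct_self_eq_zero.mp <| by
    rw [← norm_finCombination_sq ψ, h0, norm_zero, zero_pow two_ne_zero]
  rw [star_trivial, dotProduct_opMat_mulVec, real_inner_comm]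
  exact hΓ.2.1 _ hcomb

theorem isUnit_opMat_det (hΓ : memG ψ γ d Γ) (N : ℕ) : IsUnit (opMat ψ Γ N).det :=
  (hΓ.opMat_posDef N).det_pos.ne'.isUnit

theorem norm_apply_finCombination_sq_le (hΓ : memG ψ γ d Γ) {N : ℕ} (v : Fin N → ℝ) :
    ‖Γ (finCombination ψ v)‖ ^ 2 ≤ d ^ 2 * ∑ j : Fin N, γ j ^ 2 * v j ^ 2 := by
  have := (hΓ.2.2.2 (finCombination ψ v)).2
  change _ ≤ d ^ 2 * wnorm2 ψ (fun j => γ j ^ 2) _ at this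
  rwa [wnorm2_finCombination] at this

theorem sum_sq_mul_sq_le_norm_apply (hΓ : memG ψ γ d Γ) (hd : d ≠ 0) {N : ℕ}
    (v : Fin N → ℝ) :
    ∑ j : Fin N, γ j ^ 2 * v j ^ 2 ≤ d ^ 2 * ‖Γ (finCombination ψ v)‖ ^ 2 := by
  have := (hΓ.2.2.2 (finCombination ψ v)).1
  change (d ^ 2)⁻¹ * wnorm2 ψ (fun j => γ j ^ 2) _ ≤ _ at this
  rwa [wnorm2_finCombination, inv_mul_le_iff₀ (by positivity)] at this

theorem norm_apply_basis_le (hΓ : memG ψ γ d Γ) (hd : 0 ≤ d) (hγ : ∀ j, 0 ≤ γ j) (k : ℕ) :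
    ‖Γ (ψ k)‖ ≤ d * γ k := by
  have := hΓ.norm_apply_finCombination_sq_le (Pi.single (Fin.last k) 1)
  rw [finCombination_single] at this
  simp only [Fin.val_last, Pi.single_apply, ite_pow, one_pow, zero_pow two_ne_zero, mul_ite,
    mul_one, mul_zero, Finset.sum_ite_eq', Finset.mem_univ, if_true, ← mul_pow] at this
  exact (pow_le_pow_iff_left₀ (norm_nonneg _) (mul_nonneg hd (hγ k)) two_ne_zero).mp this

theorem norm_apply_finCombination_sq_le_add (hΓ : memG ψ γ d Γ) (hd : 0 ≤ d)
    (hγ : ∀ j, 0 ≤ γ j) (hγ2 : Summable fun j => γ j ^ 2) {N : ℕ} (u : Fin N → ℝ) :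
    ‖Γ (finCombination ψ u)‖ ^ 2 ≤
      (opMat ψ Γ N *ᵥ u) ⬝ᵥ (opMat ψ Γ N *ᵥ u) + d ^ 2 * (∑' j, γ (j + N) ^ 2) * (u ⬝ᵥ u) := by
  set h := finCombination ψ u
  have hpars := ψ.hasSum_inner_sq (Γ h)
  rw [← hpars.tsum_eq, ← hpars.summable.sum_add_tsum_nat_add N]
  gcongr ?_ + ?_
  · rw [← Fin.sum_univ_eq_sum_range]
    simp [dotProduct, opMat_mulVec_apply_s10, real_inner_comm, h, sq]
  · rw [← tsum_mul_left, ← tsum_mul_right]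
    refine (summable_nat_add_iff N).mpr hpars.summable |>.tsum_le_tsum (fun j => ?_)
      (((summable_nat_add_iff N).mpr hγ2).mul_left _ |>.mul_right _)
    calc ⟪Γ h, ψ (j + N)⟫ ^ 2 = ⟪h, Γ (ψ (j + N))⟫ ^ 2 := by rw [hΓ.1]
      _ ≤ (‖h‖ * ‖Γ (ψ (j + N))‖) ^ 2 := by
          rw [← sq_abs]
          gcongr
          exact abs_real_inner_le_norm _ _
      _ ≤ (‖h‖ * (d * γ (j + N))) ^ 2 := by
          gcongr
          exact hΓ.norm_apply_basis_le hd hγ _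
      _ = d ^ 2 * γ (j + N) ^ 2 * (u ⬝ᵥ u) := by
          rw [← norm_finCombination_sq ψ u]
          ring

theorem dotProduct_opMat_mulVec_le (hΓ : memG ψ γ d Γ) (hd : 0 ≤ d) (hγ : ∀ j, 0 ≤ γ j)
    {N : ℕ} (v : Fin N → ℝ) :
    v ⬝ᵥ (opMat ψ Γ N *ᵥ v) ≤ d * ∑ j : Fin N, γ j * v j ^ 2 := by
  have hB : (Matrix.diagonal fun j : Fin N => d * γ j).PosSemidef :=
    Matrix.PosSemidef.diagonal fun j => mul_nonneg hd (hγ j)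
  have key := Matrix.dotProduct_mulVec_le_of_mulVec_dotProduct_le (hΓ.opMat_isHermitian N) hB
    (fun u => ?_) v
  · simpa [dotProduct, Matrix.mulVec_diagonal, Finset.mul_sum, sq, mul_assoc, mul_left_comm]
      using key
  · calc (opMat ψ Γ N *ᵥ u) ⬝ᵥ (opMat ψ Γ N *ᵥ u) ≤ ‖Γ (finCombination ψ u)‖ ^ 2 :=
          opMat_mulVec_dotProduct_self_le ψ Γ u
      _ ≤ d ^ 2 * ∑ j : Fin N, γ j ^ 2 * u j ^ 2 := hΓ.norm_apply_finCombination_sq_le u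
      _ = _ := by
          simp only [dotProduct, Matrix.mulVec_diagonal, Finset.mul_sum]
          exact Finset.sum_congr rfl fun j _ => by ring

/-- Heinz for `diag γ` and `d [Γ]_N + d² √(∑_{j ≥ N} γ_j²)`: the multiple of the identity absorbs
the coordinates of `Γ h` beyond `N`, which the compression `[Γ]_N` does not see. -/
theorem sum_mul_sq_le_dotProduct_opMat_mulVec_add (hΓ : memG ψ γ d Γ) (hd : 0 < d)
    (hγ : ∀ j, 0 ≤ γ j) (hγ2 : Summable fun j => γ j ^ 2) {N : ℕ} (u : Fin N → ℝ) :
    ∑ j : Fin N, γ j * u j ^ 2 ≤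
      d * (u ⬝ᵥ (opMat ψ Γ N *ᵥ u)) + d ^ 2 * √(∑' j, γ (j + N) ^ 2) * (u ⬝ᵥ u) := by
  set r := ∑' j, γ (j + N) ^ 2
  set M := opMat ψ Γ N
  have hr : √r ^ 2 = r := Real.sq_sqrt (tsum_nonneg fun j => sq_nonneg _)
  have hB : (d • M + (d ^ 2 * √r) • (1 : Matrix (Fin N) (Fin N) ℝ)).PosSemidef :=
    ((hΓ.opMat_posDef N).posSemidef.smul hd.le).add (Matrix.PosSemidef.one.smul (by positivity))
  have key := Matrix.dotProduct_mulVec_le_of_mulVec_dotProduct_le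
    (Matrix.isHermitian_diagonal fun j : Fin N => γ j) hB (fun v => ?_) u
  · simpa [dotProduct, Matrix.add_mulVec, Matrix.smul_mulVec, Matrix.mulVec_diagonal, mul_add,
      Finset.sum_add_distrib, Finset.mul_sum, sq, mul_assoc, mul_left_comm] using key
  · have hlower := hΓ.sum_sq_mul_sq_le_norm_apply hd.ne' v
    have htail : ‖Γ (finCombination ψ v)‖ ^ 2 ≤ (M *ᵥ v) ⬝ᵥ (M *ᵥ v) + d ^ 2 * r * (v ⬝ᵥ v) :=
      hΓ.norm_apply_finCombination_sq_le_add hd.le hγ hγ2 v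
    have hM : 0 ≤ v ⬝ᵥ (M *ᵥ v) := by
      simpa using (hΓ.opMat_posDef N).posSemidef.dotProduct_mulVec_nonneg v
    have hvv : 0 ≤ v ⬝ᵥ v := Finset.sum_nonneg fun j _ => mul_self_nonneg (v j)
    have hL : (Matrix.diagonal (fun j : Fin N => γ j) *ᵥ v) ⬝ᵥ
        (Matrix.diagonal (fun j : Fin N => γ j) *ᵥ v) = ∑ j : Fin N, γ j ^ 2 * v j ^ 2 := by
      simp only [dotProduct, Matrix.mulVec_diagonal]
      exact Finset.sum_congr rfl fun j _ => by ring
    have hR : ((d • M + (d ^ 2 * √r) • 1) *ᵥ v) ⬝ᵥ ((d • M + (d ^ 2 * √r) • 1) *ᵥ v) =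
        d ^ 2 * ((M *ᵥ v) ⬝ᵥ (M *ᵥ v)) + 2 * d * (d ^ 2 * √r) * (v ⬝ᵥ (M *ᵥ v)) +
          (d ^ 2 * √r) ^ 2 * (v ⬝ᵥ v) := by
      simp only [Matrix.add_mulVec, Matrix.smul_mulVec, Matrix.one_mulVec, add_dotProduct,
        dotProduct_add, smul_dotProduct, dotProduct_smul, smul_eq_mul, dotProduct_comm v]
      ring
    rw [hL, hR, mul_pow, hr]
    have : 0 ≤ 2 * d * (d ^ 2 * √r) * (v ⬝ᵥ (M *ᵥ v)) := by positivity
    nlinarith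

theorem sum_mul_sq_le_dotProduct_opMat_mulVec (hΓ : memG ψ γ d Γ) (hd : 0 < d)
    (hγ : ∀ j, 0 ≤ γ j) (hγ2 : Summable fun j => γ j ^ 2) {m : ℕ} (v : Fin m → ℝ) :
    ∑ j : Fin m, γ j * v j ^ 2 ≤ d * (v ⬝ᵥ (opMat ψ Γ m *ᵥ v)) := by
  have hbound : ∀ N ≥ m, ∑ j : Fin m, γ j * v j ^ 2 ≤
      d * (v ⬝ᵥ (opMat ψ Γ m *ᵥ v)) + d ^ 2 * √(∑' j, γ (j + N) ^ 2) * (v ⬝ᵥ v) := by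
    intro N hN
    obtain ⟨k, rfl⟩ := Nat.exists_eq_add_of_le hN
    set w := Fin.append v (0 : Fin k → ℝ)
    have hsum : ∑ j : Fin (m + k), γ j * w j ^ 2 = ∑ j : Fin m, γ j * v j ^ 2 := by
      simp [w, Fin.sum_univ_add]
    have hdot : w ⬝ᵥ w = v ⬝ᵥ v := by simp [w, dotProduct, Fin.sum_univ_add]
    have hquad : w ⬝ᵥ (opMat ψ Γ (m + k) *ᵥ w) = v ⬝ᵥ (opMat ψ Γ m *ᵥ v) := by
      rw [dotProduct_opMat_mulVec, dotProduct_opMat_mulVec, finCombination_append_zero]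
    simpa only [hsum, hdot, hquad] using hΓ.sum_mul_sq_le_dotProduct_opMat_mulVec_add hd hγ hγ2 w
  have hlim : Tendsto (fun N => d * (v ⬝ᵥ (opMat ψ Γ m *ᵥ v)) +
      d ^ 2 * √(∑' j, γ (j + N) ^ 2) * (v ⬝ᵥ v)) atTop (𝓝 (d * (v ⬝ᵥ (opMat ψ Γ m *ᵥ v)))) := by
    have := (tendsto_sum_nat_add fun j => γ j ^ 2).sqrt
    simpa using ((this.const_mul (d ^ 2)).mul_const (v ⬝ᵥ v)).const_add (d * _)
  exact ge_of_tendsto hlim (eventually_atTop.mpr ⟨m, hbound⟩)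

theorem dotProduct_opMat_inv_mulVec_le (hΓ : memG ψ γ d Γ) (hd : 0 < d) (hγ : ∀ j, 0 < γ j)
    (hγ2 : Summable fun j => γ j ^ 2) {k : ℕ} (u : Fin k → ℝ) :
    u ⬝ᵥ ((opMat ψ Γ k)⁻¹ *ᵥ u) ≤ d * ∑ j : Fin k, u j ^ 2 / γ j := by
  set y := (opMat ψ Γ k)⁻¹ *ᵥ u
  have hy : opMat ψ Γ k *ᵥ y = u := by
    rw [Matrix.mulVec_mulVec, Matrix.mul_nonsing_inv _ (hΓ.isUnit_opMat_det k),
      Matrix.one_mulVec]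
  have hlow := hΓ.sum_mul_sq_le_dotProduct_opMat_mulVec hd (fun j => (hγ j).le) hγ2 y
  rw [hy, dotProduct_comm] at hlow
  have hvar := Matrix.two_mul_dotProduct_sub_sum_mul_sq_le (fun j : Fin k => hγ j) (d⁻¹ • y) u
  have hS : ∑ j : Fin k, γ j * (d⁻¹ • y) j ^ 2 = d⁻¹ ^ 2 * ∑ j : Fin k, γ j * y j ^ 2 := by
    rw [Finset.mul_sum]
    exact Finset.sum_congr rfl fun j _ => by simp only [Pi.smul_apply, smul_eq_mul]; ring
  rw [hS, smul_dotProduct, smul_eq_mul, dotProduct_comm y] at hvar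
  have hdS := mul_le_mul_of_nonneg_left hlow (sq_nonneg d⁻¹)
  rw [show d⁻¹ ^ 2 * (d * (u ⬝ᵥ y)) = d⁻¹ * (u ⬝ᵥ y) by field_simp] at hdS
  rw [← inv_mul_le_iff₀ hd]
  linarith

theorem le_dotProduct_opMat_inv_mulVec (hΓ : memG ψ γ d Γ) (hd : 0 < d) (hγ : ∀ j, 0 < γ j)
    {k : ℕ} (u : Fin k → ℝ) :
    d⁻¹ * ∑ j : Fin k, u j ^ 2 / γ j ≤ u ⬝ᵥ ((opMat ψ Γ k)⁻¹ *ᵥ u) := by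
  set x : Fin k → ℝ := fun j => u j / (d * γ j)
  have hvar := Matrix.two_mul_dotProduct_sub_le_dotProduct_inv_mulVec
    (hΓ.opMat_posDef k).posSemidef (hΓ.isUnit_opMat_det k) x u
  have hup := hΓ.dotProduct_opMat_mulVec_le hd.le (fun j => (hγ j).le) x
  have hxu : x ⬝ᵥ u = d⁻¹ * ∑ j : Fin k, u j ^ 2 / γ j := by
    simp only [x, dotProduct, Finset.mul_sum]
    exact Finset.sum_congr rfl fun j _ => by field_simp
  have hxx : d * ∑ j : Fin k, γ j * x j ^ 2 = d⁻¹ * ∑ j : Fin k, u j ^ 2 / γ j := by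
    simp only [x, Finset.mul_sum]
    exact Finset.sum_congr rfl fun j _ => by field_simp
  linarith

theorem specNorm_opMat_inv_le (hΓ : memG ψ γ d Γ) (hd : 0 < d) (hγ : ∀ j, 0 < γ j)
    (hγanti : Antitone γ) (hγ2 : Summable fun j => γ j ^ 2) (n : ℕ) :
    specNorm (opMat ψ Γ (n + 1))⁻¹ ≤ d / γ n := by
  rw [← inv_div]
  refine specNorm_inv_le (hΓ.isUnit_opMat_det _) (div_pos (hγ n) hd) fun v => ?_
  have hmin : γ n * (v ⬝ᵥ v) ≤ ∑ j : Fin (n + 1), γ j * v j ^ 2 := by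
    rw [dotProduct, Finset.mul_sum]
    exact Finset.sum_le_sum fun j _ => by nlinarith [hγanti (Fin.is_le j), mul_self_nonneg (v j)]
  have := hΓ.sum_mul_sq_le_dotProduct_opMat_mulVec hd (fun j => (hγ j).le) hγ2 v
  rw [div_mul_eq_mul_div, div_le_iff₀ hd]
  linarith

theorem inv_le_mul_specNorm_opMat_inv (hΓ : memG ψ γ d Γ) (hd : 0 < d) (hγ : ∀ j, 0 < γ j)
    (n : ℕ) : d⁻¹ ≤ γ n * specNorm (opMat ψ Γ (n + 1))⁻¹ := by
  set e : Fin (n + 1) → ℝ := Pi.single (Fin.last n) 1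
  have he : ‖WithLp.toLp 2 e‖ = 1 := by simp [e]
  have hMe : ‖WithLp.toLp 2 (opMat ψ Γ (n + 1) *ᵥ e)‖ ≤ d * γ n := by
    refine (pow_le_pow_iff_left₀ (norm_nonneg _) (mul_pos hd (hγ n)).le two_ne_zero).mp ?_
    rw [EuclideanSpace.norm_toLp_sq]
    calc _ ≤ ‖Γ (finCombination ψ e)‖ ^ 2 := opMat_mulVec_dotProduct_self_le ψ Γ e
      _ ≤ (d * γ n) ^ 2 := by
          rw [finCombination_single, Fin.val_last]
          gcongr
          exact hΓ.norm_apply_basis_le hd.le (fun j => (hγ j).le) n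
  have := (norm_le_specNorm_inv_mul (hΓ.isUnit_opMat_det (n + 1)) e).trans
    (mul_le_mul_of_nonneg_left hMe (norm_nonneg _))
  rw [he] at this
  rw [inv_le_iff_one_le_mul₀' hd]
  linarith

theorem iSup_specNorm_opMat_inv_le (hΓ : memG ψ γ d Γ) (hd : 0 < d) (hγ : ∀ j, 0 < γ j)
    (hγanti : Antitone γ) (hγ2 : Summable fun j => γ j ^ 2) (n : ℕ) :
    ⨆ k : Fin (n + 1), specNorm (opMat ψ Γ (k + 1))⁻¹ ≤ d / γ n :=
  ciSup_le fun k => (hΓ.specNorm_opMat_inv_le hd hγ hγanti hγ2 k).trans <|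
    div_le_div_of_nonneg_left hd.le (hγ n) (hγanti (Fin.is_le k))

theorem Vmax_le (hΓ : memG ψ γ d Γ) (hd : 0 < d) (hγ : ∀ j, 0 < γ j)
    (hγ2 : Summable fun j => γ j ^ 2) (lc : ℕ → ℝ) (n : ℕ) :
    Vmax ψ lc Γ (n + 1) ≤ d * Vgam lc γ (n + 1) :=
  ciSup_le fun k => (hΓ.dotProduct_opMat_inv_mulVec_le hd hγ hγ2 _).trans <| by
    rw [sum_ellvec_sq_div]
    exact mul_le_mul_of_nonneg_left (Vgam_mono hγ (Fin.is_le k |> Nat.succ_le_succ)) hd.le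

theorem inv_mul_Vgam_le_Vmax (hΓ : memG ψ γ d Γ) (hd : 0 < d) (hγ : ∀ j, 0 < γ j)
    (lc : ℕ → ℝ) (n : ℕ) : d⁻¹ * Vgam lc γ (n + 1) ≤ Vmax ψ lc Γ (n + 1) := by
  have := hΓ.le_dotProduct_opMat_inv_mulVec hd hγ (ellvec lc (n + 1))
  rw [sum_ellvec_sq_div] at this
  exact this.trans (le_iSup_fin_succ (fun k => ellvec lc k ⬝ᵥ ((opMat ψ Γ k)⁻¹ *ᵥ ellvec lc k)) n)

end memG

end

theorem stmt_10_general (ψ : HilbertBasis ℕ ℝ H) (γ : ℕ → ℝ) (d : ℝ) (hd : 1 ≤ d)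
    (hγpos : ∀ j, 0 < γ j) (hγanti : Antitone γ)
    (hγsum : Summable γ)
    (lc : ℕ → ℝ) (hl1 : lc 0 = 1)
    (Γ : H →L[ℝ] H) (hΓ : memG ψ γ d Γ) :
    ∀ m : ℕ, 1 ≤ m →
      (d⁻¹ ≤ Vmax ψ lc Γ m / Vgam lc γ m ∧ Vmax ψ lc Γ m / Vgam lc γ m ≤ 4 * d ^ 3) ∧
      (d⁻¹ ≤ γ (m - 1) * specNorm (opMat ψ Γ m)⁻¹ ∧
        γ (m - 1) * specNorm (opMat ψ Γ m)⁻¹ ≤ 4 * d ^ 3) ∧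
      (d⁻¹ ≤ γ (m - 1) * ⨆ k : Fin m, specNorm (opMat ψ Γ (k + 1))⁻¹ ∧
        γ (m - 1) * (⨆ k : Fin m, specNorm (opMat ψ Γ (k + 1))⁻¹) ≤ 4 * d ^ 3) := by
  intro m hm
  obtain ⟨n, rfl⟩ := Nat.exists_eq_add_of_le' hm
  rw [Nat.add_sub_cancel]
  have hd0 : 0 < d := by linarith
  have hD : d ≤ 4 * d ^ 3 := by nlinarith [one_le_pow₀ (n := 2) hd]
  have hγ2 : Summable fun j => γ j ^ 2 :=
    (hγsum.mul_left (γ 0)).of_nonneg_of_le (fun j => sq_nonneg _)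
      fun j => by nlinarith [hγanti (Nat.zero_le j), hγpos j]
  have hV : 0 < Vgam lc γ (n + 1) := Vgam_pos hγpos (by simp [hl1]) n
  have hspec := hΓ.inv_le_mul_specNorm_opMat_inv hd0 hγpos n
  refine ⟨⟨?_, ?_⟩, ⟨hspec, ?_⟩, ⟨?_, ?_⟩⟩
  · rw [le_div_iff₀ hV]
    exact hΓ.inv_mul_Vgam_le_Vmax hd0 hγpos lc n
  · rw [div_le_iff₀ hV]
    exact (hΓ.Vmax_le hd0 hγpos hγ2 lc n).trans (mul_le_mul_of_nonneg_right hD hV.le)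
  · exact ((le_div_iff₀' (hγpos n)).mp (hΓ.specNorm_opMat_inv_le hd0 hγpos hγanti hγ2 n)).trans hD
  · exact hspec.trans (mul_le_mul_of_nonneg_left
      (le_iSup_fin_succ (fun k => specNorm (opMat ψ Γ k)⁻¹) n) (hγpos n).le)
  · exact ((le_div_iff₀' (hγpos n)).mp
      (hΓ.iSup_specNorm_opMat_inv_le hd0 hγpos hγanti hγ2 n)).trans hD

/-- Lemma A.1 (i): comparison of `V_m`, `V_m^γ` and `‖[Γ]_m⁻¹‖` with `D = 4d³`. -/
theorem stmt_10 (ψ : HilbertBasis ℕ ℝ H) (γ : ℕ → ℝ) (d : ℝ) (hd : 1 ≤ d)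
    (hγ1 : γ 0 = 1) (hγpos : ∀ j, 0 < γ j) (hγanti : Antitone γ)
    (hγ0 : Filter.Tendsto γ Filter.atTop (nhds 0)) (hγsum : Summable γ)
    (β : ℕ → ℝ) (hβ1 : β 0 = 1) (hβmono : Monotone β)
    (hβ0 : Filter.Tendsto (fun j => (β j)⁻¹) Filter.atTop (nhds 0))
    (lc : ℕ → ℝ) (hl1 : lc 0 = 1) (hlβ : Summable (fun j => lc j ^ 2 / β j))
    (Γ : H →L[ℝ] H) (hΓ : memG ψ γ d Γ) :
    ∀ m : ℕ, 1 ≤ m →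
      (d⁻¹ ≤ Vmax ψ lc Γ m / Vgam lc γ m ∧ Vmax ψ lc Γ m / Vgam lc γ m ≤ 4 * d ^ 3) ∧
      (d⁻¹ ≤ γ (m - 1) * specNorm (opMat ψ Γ m)⁻¹ ∧
        γ (m - 1) * specNorm (opMat ψ Γ m)⁻¹ ≤ 4 * d ^ 3) ∧
      (d⁻¹ ≤ γ (m - 1) * ⨆ k : Fin m, specNorm (opMat ψ Γ (k + 1))⁻¹ ∧
        γ (m - 1) * (⨆ k : Fin m, specNorm (opMat ψ Γ (k + 1))⁻¹) ≤ 4 * d ^ 3) :=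
  stmt_10_general ψ γ d hd hγpos hγanti hγsum lc hl1 Γ hΓ
end
end

section
/- Under the functional linear model with Γ ∈ G_γ^d and the Assumption, for all n, m ≥ 1 the following inclusion of events holds: { 1/4 < ‖[Γ̂]_m^{−1}‖/‖[Γ]_m^{−1}‖ ≤ 4 for all 1 ≤ m ≤ M_n^ℓ } ⊂ { M_n^− ≤ M̂_n ≤ M_n^+ }, where M_n^+ := M_n(a) with a_j = (4dγ_j)^{−1} and M_n^− := M_n(a) with a_j = 16d³/γ_j. -/
open scoped RealInnerProductSpace Classical ENNReal NNReal
open Matrix MeasureTheory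

noncomputable section

variable {H : Type} [NormedAddCommGroup H] [InnerProductSpace ℝ H] [CompleteSpace H]

variable {Ω : Type}

/-- Inverse of the positive square root of a positive definite matrix
(junk value `0` otherwise). -/
def invSqrtMat {m : ℕ} (A : Matrix (Fin m) (Fin m) ℝ) : Matrix (Fin m) (Fin m) ℝ :=
  if h : A.PosDef then (h.posSemidef.1.eigenvectorUnitary.1 *
      diagonal ((↑) ∘ (√·) ∘ h.posSemidef.1.eigenvalues) *
      (star h.posSemidef.1.eigenvectorUnitary : Matrix (Fin m) (Fin m) ℝ))⁻¹ else 0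

/-- `[Ξ]_m = [Γ]_m^{-1/2} [Γ̂]_m [Γ]_m^{-1/2} − I`. -/
def XiMat (ψ : HilbertBasis ℕ ℝ H) (Γ : H →L[ℝ] H) (n : ℕ) (X : Fin n → Ω → H)
    (m : ℕ) (ω : Ω) : Matrix (Fin m) (Fin m) ℝ :=
  invSqrtMat (opMat ψ Γ m) * hatGam ψ n X m ω * invSqrtMat (opMat ψ Γ m) - 1

/-- `[W]_m = [ĝ]_m − [Γ̂]_m [φ_m]_m`. -/
def Wvec (ψ : HilbertBasis ℕ ℝ H) (Γ : H →L[ℝ] H) (φ : H) (n : ℕ)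
    (X : Fin n → Ω → H) (Y : Fin n → Ω → ℝ) (m : ℕ) (ω : Ω) : Fin m → ℝ :=
  hatgv ψ n X Y m ω - (hatGam ψ n X m ω) *ᵥ galCoef ψ Γ φ m

section Aux13

lemma st13_star_id {m : ℕ} (x : Fin m → ℝ) : star x = x := by
  funext i; simp

lemma st13_dot_self_nonneg {m : ℕ} (x : Fin m → ℝ) : 0 ≤ x ⬝ᵥ x :=
  Finset.sum_nonneg fun i _ => mul_self_nonneg _

lemma st13_inner_symm_eq_dot {m : ℕ} (v w : Fin m → ℝ) :
    inner ℝ ((WithLp.equiv 2 (Fin m → ℝ)).symm v) ((WithLp.equiv 2 (Fin m → ℝ)).symm w)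
      = v ⬝ᵥ w := by
  change w ⬝ᵥ star v = v ⬝ᵥ w
  rw [st13_star_id, dotProduct_comm]

lemma st13_norm_symm_sq {m : ℕ} (v : Fin m → ℝ) :
    ‖(WithLp.equiv 2 (Fin m → ℝ)).symm v‖ ^ 2 = v ⬝ᵥ v := by
  rw [← real_inner_self_eq_norm_sq, st13_inner_symm_eq_dot]

lemma st13_clm_apply {m : ℕ} (A : Matrix (Fin m) (Fin m) ℝ) (v : Fin m → ℝ) :
    Matrix.toEuclideanCLM (𝕜 := ℝ) A ((WithLp.equiv 2 (Fin m → ℝ)).symm v)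
      = (WithLp.equiv 2 (Fin m → ℝ)).symm (A *ᵥ v) := by
  exact Matrix.toEuclideanCLM_toLp A v

lemma st13_herm_dot {m : ℕ} {A : Matrix (Fin m) (Fin m) ℝ} (hA : A.IsHermitian)
    (x y : Fin m → ℝ) : x ⬝ᵥ (A *ᵥ y) = (A *ᵥ x) ⬝ᵥ y := by
  rw [Matrix.dotProduct_mulVec, ← Matrix.vecMul_transpose]
  congr 1
  rw [← Matrix.conjTranspose_eq_transpose_of_trivial, hA.eq]

lemma st13_specNorm_zero {m : ℕ} : specNorm (0 : Matrix (Fin m) (Fin m) ℝ)⁻¹ = 0 := by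
  rw [specNorm, Matrix.inv_zero, map_zero, norm_zero]

lemma st13_dot_cs {m : ℕ} (u w : Fin m → ℝ) : (u ⬝ᵥ w)^2 ≤ (u ⬝ᵥ u) * (w ⬝ᵥ w) := by
  have h := real_inner_mul_inner_self_le ((WithLp.equiv 2 (Fin m → ℝ)).symm u)
    ((WithLp.equiv 2 (Fin m → ℝ)).symm w)
  rw [st13_inner_symm_eq_dot, st13_inner_symm_eq_dot, st13_inner_symm_eq_dot] at h
  nlinarith [h]

end Aux13

section Aux13b

lemma st13_specNorm_inv_le_of_form {m : ℕ} {A : Matrix (Fin m) (Fin m) ℝ}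
    (hdet : IsUnit A.det) {c : ℝ} (hc : 0 < c)
    (hform : ∀ x, c * (x ⬝ᵥ x) ≤ x ⬝ᵥ (A *ᵥ x)) :
    specNorm A⁻¹ ≤ c⁻¹ := by
  rw [specNorm]
  refine ContinuousLinearMap.opNorm_le_bound _ (inv_nonneg.mpr hc.le) fun y => ?_
  rw [show y = (WithLp.equiv 2 (Fin m → ℝ)).symm (WithLp.equiv 2 (Fin m → ℝ) y) from
    ((WithLp.equiv 2 (Fin m → ℝ)).symm_apply_apply y).symm, st13_clm_apply]
  set v := WithLp.equiv 2 (Fin m → ℝ) y with hv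
  set u := A⁻¹ *ᵥ v with hu
  have hAu : A *ᵥ u = v := by
    rw [hu, Matrix.mulVec_mulVec, Matrix.mul_nonsing_inv _ hdet, Matrix.one_mulVec]
  have h1 : c * (u ⬝ᵥ u) ≤ u ⬝ᵥ v := by
    have := hform u; rwa [hAu] at this
  have h2 : u ⬝ᵥ v ≤ ‖(WithLp.equiv 2 (Fin m → ℝ)).symm u‖ *
      ‖(WithLp.equiv 2 (Fin m → ℝ)).symm v‖ := by
    rw [← st13_inner_symm_eq_dot]; exact real_inner_le_norm _ _
  have h3 := st13_norm_symm_sq u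
  have ha : (0:ℝ) ≤ ‖(WithLp.equiv 2 (Fin m → ℝ)).symm u‖ := norm_nonneg _
  have hb : (0:ℝ) ≤ ‖(WithLp.equiv 2 (Fin m → ℝ)).symm v‖ := norm_nonneg _
  set a := ‖(WithLp.equiv 2 (Fin m → ℝ)).symm u‖
  set b := ‖(WithLp.equiv 2 (Fin m → ℝ)).symm v‖
  have key : c * a ≤ b := by
    rcases eq_or_lt_of_le ha with h | h
    · rw [← h, mul_zero]; exact hb
    · nlinarith
  calc a = c⁻¹ * (c * a) := by field_simp
  _ ≤ c⁻¹ * b := by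
    have := inv_nonneg.mpr hc.le
    exact mul_le_mul_of_nonneg_left key this

lemma st13_le_specNorm_inv {m : ℕ} {A : Matrix (Fin m) (Fin m) ℝ}
    (hA : A.PosSemidef) (hdet : IsUnit A.det) (i : Fin m) {t : ℝ}
    (ht : 0 < t) (hAt : A i i ≤ t) : t⁻¹ ≤ specNorm A⁻¹ := by
  classical
  set e : Fin m → ℝ := Pi.single i 1 with he
  obtain ⟨B, hB⟩ : ∃ B : Matrix (Fin m) (Fin m) ℝ, A = Bᴴ * B := by
    open scoped MatrixOrder in
    exact CStarAlgebra.nonneg_iff_eq_star_mul_self.mp hA.nonneg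
  have key : ∀ z w : Fin m → ℝ, z ⬝ᵥ (A *ᵥ w) = (B *ᵥ z) ⬝ᵥ (B *ᵥ w) := by
    intro z w
    rw [hB, ← Matrix.mulVec_mulVec, Matrix.dotProduct_mulVec,
      Matrix.conjTranspose_eq_transpose_of_trivial, Matrix.vecMul_transpose]
  have hee : e ⬝ᵥ e = 1 := by rw [he, single_dotProduct]; simp
  have hAinv : A *ᵥ (A⁻¹ *ᵥ e) = e := by
    rw [Matrix.mulVec_mulVec, Matrix.mul_nonsing_inv _ hdet, Matrix.one_mulVec]
  set r := (A⁻¹ *ᵥ e) ⬝ᵥ e with hr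
  have h2 : e ⬝ᵥ (A *ᵥ e) = A i i := by
    rw [he, Matrix.mulVec_single, single_dotProduct]; simp
  have h1 : (B *ᵥ e) ⬝ᵥ (B *ᵥ (A⁻¹ *ᵥ e)) = 1 := by
    rw [← key, hAinv, hee]
  have h3 : (B *ᵥ (A⁻¹ *ᵥ e)) ⬝ᵥ (B *ᵥ (A⁻¹ *ᵥ e)) = r := by
    rw [← key, hAinv, hr]
  have h4 : (B *ᵥ e) ⬝ᵥ (B *ᵥ e) = A i i := by rw [← key, h2]
  have hcs := st13_dot_cs (B *ᵥ e) (B *ᵥ (A⁻¹ *ᵥ e))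
  rw [h1, h3, h4] at hcs
  have hr0 : 0 ≤ r := by rw [← h3]; exact st13_dot_self_nonneg _
  have hAii : 0 ≤ A i i := by rw [← h4]; exact st13_dot_self_nonneg _
  have h5 : (1:ℝ) ≤ t * r := by nlinarith
  have h6 : t⁻¹ ≤ r := by
    rw [inv_le_iff_one_le_mul₀ ht]
    nlinarith
  refine le_trans h6 ?_
  -- r ≤ specNorm A⁻¹
  have h7 : r = inner ℝ (Matrix.toEuclideanCLM (𝕜 := ℝ) A⁻¹ ((WithLp.equiv 2 (Fin m → ℝ)).symm e))
      ((WithLp.equiv 2 (Fin m → ℝ)).symm e) := by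
    rw [st13_clm_apply, st13_inner_symm_eq_dot, hr]
  have hne : ‖(WithLp.equiv 2 (Fin m → ℝ)).symm e‖ = 1 := by
    have := st13_norm_symm_sq e
    rw [hee] at this
    nlinarith [norm_nonneg ((WithLp.equiv 2 (Fin m → ℝ)).symm e)]
  rw [h7]
  calc inner ℝ _ _ ≤ ‖Matrix.toEuclideanCLM (𝕜 := ℝ) A⁻¹ ((WithLp.equiv 2 (Fin m → ℝ)).symm e)‖ *
      ‖(WithLp.equiv 2 (Fin m → ℝ)).symm e‖ := real_inner_le_norm _ _
  _ ≤ (‖Matrix.toEuclideanCLM (𝕜 := ℝ) A⁻¹‖ * ‖(WithLp.equiv 2 (Fin m → ℝ)).symm e‖) *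
      ‖(WithLp.equiv 2 (Fin m → ℝ)).symm e‖ := by
    have := ContinuousLinearMap.le_opNorm (Matrix.toEuclideanCLM (𝕜 := ℝ) A⁻¹)
      ((WithLp.equiv 2 (Fin m → ℝ)).symm e)
    exact mul_le_mul_of_nonneg_right this (norm_nonneg _)
  _ = specNorm A⁻¹ := by rw [hne, specNorm]; ring

end Aux13b

section Aux13c

lemma st13_form_mono_of_sq {M : ℕ} {A B : Matrix (Fin M) (Fin M) ℝ}
    (hA : A.PosSemidef) (hB : B.PosSemidef)
    (h : ∀ y : Fin M → ℝ, y ⬝ᵥ ((A * A) *ᵥ y) ≤ y ⬝ᵥ ((B * B) *ᵥ y)) :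
    ∀ y : Fin M → ℝ, y ⬝ᵥ (A *ᵥ y) ≤ y ⬝ᵥ (B *ᵥ y) := by
  classical
  have hD : (B - A).IsHermitian := hB.1.sub hA.1
  suffices hpsd : (B - A).PosSemidef by
    intro y
    have h2 := hpsd.dotProduct_mulVec_nonneg y
    rw [st13_star_id, Matrix.sub_mulVec, dotProduct_sub] at h2
    linarith
  refine hD.posSemidef_iff_eigenvalues_nonneg.mpr (Pi.le_def.mpr fun i => ?_)
  show (0:ℝ) ≤ hD.eigenvalues i
  by_contra hneg
  push_neg at hneg
  set μ := hD.eigenvalues i with hμ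
  have hv := hD.mulVec_eigenvectorBasis i
  set v : Fin M → ℝ := ⇑(hD.eigenvectorBasis i) with hvdef
  have hBD : v ⬝ᵥ ((B * (B - A)) *ᵥ v) = μ * (v ⬝ᵥ (B *ᵥ v)) := by
    rw [← Matrix.mulVec_mulVec, hv, Matrix.mulVec_smul, dotProduct_smul, smul_eq_mul]
  have hDA : v ⬝ᵥ (((B - A) * A) *ᵥ v) = μ * (v ⬝ᵥ (A *ᵥ v)) := by
    rw [← Matrix.mulVec_mulVec, st13_herm_dot hD, hv, smul_dotProduct, smul_eq_mul]
  have h0 := h v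
  have hring : B * B - A * A = B * (B - A) + (B - A) * A := by noncomm_ring
  have hsplit : v ⬝ᵥ ((B * B) *ᵥ v) - v ⬝ᵥ ((A * A) *ᵥ v)
      = μ * (v ⬝ᵥ (B *ᵥ v)) + μ * (v ⬝ᵥ (A *ᵥ v)) := by
    rw [← dotProduct_sub, ← Matrix.sub_mulVec, hring, Matrix.add_mulVec,
      dotProduct_add, hBD, hDA]
  have ha := hA.dotProduct_mulVec_nonneg v
  have hb := hB.dotProduct_mulVec_nonneg v
  rw [st13_star_id] at ha hb
  have hzeroA : v ⬝ᵥ (A *ᵥ v) = 0 := by nlinarith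
  have hzeroB : v ⬝ᵥ (B *ᵥ v) = 0 := by nlinarith
  have hAv : A *ᵥ v = 0 := by
    have hiff := hA.dotProduct_mulVec_zero_iff v
    rw [st13_star_id] at hiff
    exact hiff.mp hzeroA
  have hBv : B *ᵥ v = 0 := by
    have hiff := hB.dotProduct_mulVec_zero_iff v
    rw [st13_star_id] at hiff
    exact hiff.mp hzeroB
  have hzero : μ • v = 0 := by
    rw [← hv, Matrix.sub_mulVec, hAv, hBv, sub_zero]
  have hvne : v ≠ 0 := by
    have h1 : hD.eigenvectorBasis i ≠ 0 := hD.eigenvectorBasis.orthonormal.ne_zero i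
    intro hc
    apply h1
    ext j
    exact congrFun hc j
  rcases smul_eq_zero.mp hzero with h' | h'
  · exact absurd h' (ne_of_lt hneg)
  · exact hvne h'

end Aux13c

section Aux13d

def st13_hvec (ψ : HilbertBasis ℕ ℝ H) {M : ℕ} (x : Fin M → ℝ) : H :=
  ∑ j : Fin M, x j • ψ (j : ℕ)

lemma st13_inner_psi_psi (ψ : HilbertBasis ℕ ℝ H) (j k : ℕ) :
    ⟪ψ j, ψ k⟫ = if j = k then (1:ℝ) else 0 := by
  have h := ψ.orthonormal
  rw [orthonormal_iff_ite] at h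
  exact h j k

lemma st13_inner_hvec_psi (ψ : HilbertBasis ℕ ℝ H) {M : ℕ} (x : Fin M → ℝ) (k : ℕ) :
    ⟪st13_hvec ψ x, ψ k⟫ = if h : k < M then x ⟨k, h⟩ else 0 := by
  rw [st13_hvec, sum_inner]
  have hterm : ∀ j : Fin M, ⟪x j • ψ (j:ℕ), ψ k⟫ = x j * (if (j:ℕ) = k then 1 else 0) := by
    intro j
    rw [real_inner_smul_left, st13_inner_psi_psi]
  split_ifs with h
  · rw [Finset.sum_eq_single (⟨k, h⟩ : Fin M)]
    · rw [hterm ⟨k, h⟩]; simp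
    · intro j _ hj
      rw [hterm j, if_neg fun hc => hj (Fin.ext hc), mul_zero]
    · intro hc
      exact absurd (Finset.mem_univ _) hc
  · apply Finset.sum_eq_zero
    intro j _
    have hjM := j.isLt
    have hne : (j:ℕ) ≠ k := by omega
    rw [hterm j, if_neg hne, mul_zero]

lemma st13_inner_hvec_hvec (ψ : HilbertBasis ℕ ℝ H) {M : ℕ} (x : Fin M → ℝ) :
    ⟪st13_hvec ψ x, st13_hvec ψ x⟫ = x ⬝ᵥ x := by
  nth_rewrite 1 [st13_hvec]
  rw [sum_inner]
  rw [dotProduct]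
  apply Finset.sum_congr rfl
  intro j _
  rw [real_inner_smul_left, real_inner_comm, st13_inner_hvec_psi, dif_pos j.isLt]

lemma st13_mulVec_opMat (ψ : HilbertBasis ℕ ℝ H) (Γ : H →L[ℝ] H) {M : ℕ}
    (x : Fin M → ℝ) (j : Fin M) :
    (opMat ψ Γ M *ᵥ x) j = ⟪ψ (j:ℕ), Γ (st13_hvec ψ x)⟫ := by
  rw [st13_hvec, map_sum, inner_sum, Matrix.mulVec, dotProduct]
  apply Finset.sum_congr rfl
  intro k _
  rw [ContinuousLinearMap.map_smul, inner_smul_right]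
  show (⟪ψ (j:ℕ), Γ (ψ (k:ℕ))⟫) * x k = x k * ⟪ψ (j:ℕ), Γ (ψ (k:ℕ))⟫
  ring

lemma st13_quad_eq (ψ : HilbertBasis ℕ ℝ H) (Γ : H →L[ℝ] H) {M : ℕ} (x : Fin M → ℝ) :
    x ⬝ᵥ (opMat ψ Γ M *ᵥ x) = ⟪Γ (st13_hvec ψ x), st13_hvec ψ x⟫ := by
  rw [real_inner_comm]
  nth_rewrite 1 [st13_hvec]
  rw [sum_inner, dotProduct]
  apply Finset.sum_congr rfl
  intro j _
  rw [real_inner_smul_left, st13_mulVec_opMat]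

end Aux13d

section Aux13e

lemma st13_parseval (ψ : HilbertBasis ℕ ℝ H) (w : H) :
    HasSum (fun k => ⟪w, ψ k⟫ ^ 2) (‖w‖ ^ 2) := by
  have h := ψ.hasSum_inner_mul_inner w w
  have heq : (fun i => ⟪w, ψ i⟫ * ⟪ψ i, w⟫) = fun i => ⟪w, ψ i⟫ ^ 2 := by
    funext i
    rw [real_inner_comm (ψ i) w, sq]
  rw [heq, real_inner_self_eq_norm_sq] at h
  exact h

lemma st13_opMat_herm (ψ : HilbertBasis ℕ ℝ H) {Γ : H →L[ℝ] H}
    (hsym : ∀ x y : H, ⟪Γ x, y⟫ = ⟪x, Γ y⟫) (M : ℕ) : (opMat ψ Γ M).IsHermitian := by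
  rw [Matrix.IsHermitian]
  ext j k
  rw [Matrix.conjTranspose_apply, star_trivial]
  show ⟪ψ (k:ℕ), Γ (ψ (j:ℕ))⟫ = ⟪ψ (j:ℕ), Γ (ψ (k:ℕ))⟫
  rw [← hsym, real_inner_comm]

lemma st13_opMat_psd (ψ : HilbertBasis ℕ ℝ H) {γ : ℕ → ℝ} {d : ℝ} {Γ : H →L[ℝ] H}
    (hΓ : memG ψ γ d Γ) (M : ℕ) : (opMat ψ Γ M).PosSemidef := by
  refine Matrix.PosSemidef.of_dotProduct_mulVec_nonneg (st13_opMat_herm ψ hΓ.1 M) fun x => ?_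
  rw [st13_star_id, st13_quad_eq]
  by_cases hz : st13_hvec ψ x = 0
  · rw [hz]; simp
  · exact (hΓ.2.1 _ hz).le

lemma st13_norm_Gpsi_sq_le (ψ : HilbertBasis ℕ ℝ H) {γ : ℕ → ℝ} {d : ℝ} {Γ : H →L[ℝ] H}
    (hΓ : memG ψ γ d Γ) (k : ℕ) : ‖Γ (ψ k)‖ ^ 2 ≤ d ^ 2 * γ k ^ 2 := by
  have h := (hΓ.2.2.2 (ψ k)).2
  have htsum : (∑' j, γ j ^ 2 * ⟪ψ k, ψ j⟫ ^ 2) = γ k ^ 2 := by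
    rw [tsum_eq_single k]
    · rw [st13_inner_psi_psi, if_pos rfl]; ring
    · intro j hj
      rw [st13_inner_psi_psi, if_neg (by omega)]
      ring
  rw [htsum] at h
  exact h

lemma st13_coeff_sq_le (ψ : HilbertBasis ℕ ℝ H) {γ : ℕ → ℝ} {d : ℝ} {Γ : H →L[ℝ] H}
    (hΓ : memG ψ γ d Γ) {M : ℕ} (x : Fin M → ℝ) (k : ℕ) :
    ⟪Γ (st13_hvec ψ x), ψ k⟫ ^ 2 ≤ (x ⬝ᵥ x) * (d ^ 2 * γ k ^ 2) := by
  have h1 : ⟪Γ (st13_hvec ψ x), ψ k⟫ = ⟪st13_hvec ψ x, Γ (ψ k)⟫ := hΓ.1 _ _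
  have h2 := real_inner_mul_inner_self_le (st13_hvec ψ x) (Γ (ψ k))
  rw [st13_inner_hvec_hvec, real_inner_self_eq_norm_sq] at h2
  have h3 := st13_norm_Gpsi_sq_le ψ hΓ k
  have h4 := st13_dot_self_nonneg x
  rw [h1, sq]
  exact le_trans h2 (mul_le_mul_of_nonneg_left h3 h4)

end Aux13e

section Aux13f

lemma st13_dot_diag {M : ℕ} (c y : Fin M → ℝ) :
    y ⬝ᵥ (Matrix.diagonal c *ᵥ y) = ∑ j, c j * y j ^ 2 := by
  rw [dotProduct]
  apply Finset.sum_congr rfl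
  intro j _
  rw [Matrix.mulVec_diagonal]
  ring

set_option maxHeartbeats 1000000 in
lemma st13_opMat_form_lower (ψ : HilbertBasis ℕ ℝ H) {γ : ℕ → ℝ} {d : ℝ} (hd : 1 ≤ d)
    (hγ1 : γ 0 = 1) (hγpos : ∀ j, 0 < γ j) (hγanti : Antitone γ) (hγsum : Summable γ)
    {Γ : H →L[ℝ] H} (hΓ : memG ψ γ d Γ) {m : ℕ} (hm : 1 ≤ m) (x : Fin m → ℝ) :
    γ (m - 1) / d * (x ⬝ᵥ x) ≤ x ⬝ᵥ (opMat ψ Γ m *ᵥ x) := by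
  have hd0 : (0:ℝ) < d := lt_of_lt_of_le one_pos hd
  have hγle1 : ∀ j, γ j ≤ 1 := fun j => hγ1 ▸ hγanti (Nat.zero_le j)
  have hsq_summ : Summable (fun j => γ j ^ 2) := by
    refine Summable.of_nonneg_of_le (fun j => sq_nonneg _) (fun j => ?_) hγsum
    have := (hγpos j).le
    nlinarith [hγle1 j]
  refine le_of_forall_pos_le_add fun ε hε => ?_
  have hs0 : 0 ≤ x ⬝ᵥ x := st13_dot_self_nonneg x
  set s := x ⬝ᵥ x with hsdef
  set δ := ε / (1 + s) with hδdef
  have hδ0 : 0 < δ := div_pos hε (by linarith)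
  -- choose the dimension M
  have hTail : Filter.Tendsto (fun M => ∑' k : ℕ, γ (k + M) ^ 2) Filter.atTop (nhds 0) := by
    have h1 : ∀ M : ℕ, ∑' k : ℕ, γ (k + M) ^ 2
        = (∑' j, γ j ^ 2) - ∑ j ∈ Finset.range M, γ j ^ 2 := by
      intro M
      have h2 := Summable.sum_add_tsum_nat_add (f := fun j => γ j ^ 2) M hsq_summ
      linarith
    have h3 : Filter.Tendsto (fun M => (∑' j, γ j ^ 2) - ∑ j ∈ Finset.range M, γ j ^ 2)
        Filter.atTop (nhds ((∑' j, γ j ^ 2) - (∑' j, γ j ^ 2))) :=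
      Filter.Tendsto.const_sub _ hsq_summ.hasSum.tendsto_sum_nat
    rw [sub_self] at h3
    simpa only [h1] using h3
  have hd2 : (0:ℝ) < d ^ 2 := by positivity
  have hEv : ∀ᶠ M in Filter.atTop, d ^ 2 * ∑' k : ℕ, γ (k + M) ^ 2 ≤ δ ^ 2 := by
    have h4 : (0:ℝ) < δ ^ 2 / d ^ 2 := by positivity
    filter_upwards [hTail.eventually_lt_const h4] with M hM
    rw [mul_comm]
    exact le_of_lt ((lt_div_iff₀ hd2).mp hM)
  obtain ⟨M, hMm, hMtail⟩ := ((Filter.eventually_ge_atTop m).and hEv).exists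
  -- matrices of size M
  set A := opMat ψ Γ M with hAdef
  have hAherm : A.IsHermitian := st13_opMat_herm ψ hΓ.1 M
  have hApsd : A.PosSemidef := st13_opMat_psd ψ hΓ M
  set Dv : Fin M → ℝ := fun j => γ (j : ℕ) / d with hDvdef
  set D := Matrix.diagonal Dv with hDdef
  have hDpsd : D.PosSemidef :=
    Matrix.posSemidef_diagonal_iff.mpr fun i => div_nonneg (hγpos _).le hd0.le
  have hshift : ∀ y : Fin M → ℝ, (A + δ • (1 : Matrix (Fin M) (Fin M) ℝ)) *ᵥ y
      = A *ᵥ y + δ • y := by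
    intro y
    rw [Matrix.add_mulVec, Matrix.smul_mulVec, Matrix.one_mulVec]
  have hA1herm : (A + δ • (1 : Matrix (Fin M) (Fin M) ℝ)).IsHermitian := by
    rw [Matrix.IsHermitian, Matrix.conjTranspose_add, Matrix.conjTranspose_smul,
      Matrix.conjTranspose_one, hAherm.eq, star_trivial]
  have hA1psd : (A + δ • (1 : Matrix (Fin M) (Fin M) ℝ)).PosSemidef := by
    refine Matrix.PosSemidef.of_dotProduct_mulVec_nonneg hA1herm fun y => ?_
    rw [st13_star_id, hshift, dotProduct_add, dotProduct_smul, smul_eq_mul]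
    have h5 := hApsd.dotProduct_mulVec_nonneg y
    rw [st13_star_id] at h5
    have h6 := st13_dot_self_nonneg y
    nlinarith [mul_nonneg hδ0.le h6]
  -- the square comparison
  have hnormw : ∀ y : Fin M → ℝ, ‖Γ (st13_hvec ψ y)‖ ^ 2
      ≤ (A *ᵥ y) ⬝ᵥ (A *ᵥ y) + δ ^ 2 * (y ⬝ᵥ y) := by
    intro y
    set w := Γ (st13_hvec ψ y) with hwdef
    have hF := st13_parseval ψ w
    have hFs : Summable (fun k => ⟪w, ψ k⟫ ^ 2) := hF.summable
    have hsplit := Summable.sum_add_tsum_nat_add (f := fun k => ⟪w, ψ k⟫ ^ 2) M hFs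
    rw [hF.tsum_eq] at hsplit
    have hhead : ∑ i ∈ Finset.range M, ⟪w, ψ i⟫ ^ 2 = (A *ᵥ y) ⬝ᵥ (A *ᵥ y) := by
      rw [← Fin.sum_univ_eq_sum_range (fun k => ⟪w, ψ k⟫ ^ 2) M, dotProduct]
      apply Finset.sum_congr rfl
      intro j _
      rw [hAdef, st13_mulVec_opMat, ← hwdef, real_inner_comm, sq]
    have htail : ∑' k : ℕ, ⟪w, ψ (k + M)⟫ ^ 2 ≤ (y ⬝ᵥ y) * (d ^ 2 * ∑' k : ℕ, γ (k + M) ^ 2) := by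
      have hsum1 : Summable (fun k => ⟪w, ψ (k + M)⟫ ^ 2) := (summable_nat_add_iff M).mpr hFs
      have hsum2 : Summable (fun k : ℕ => (y ⬝ᵥ y) * (d ^ 2 * γ (k + M) ^ 2)) :=
        (((summable_nat_add_iff M).mpr hsq_summ).mul_left (d ^ 2)).mul_left (y ⬝ᵥ y)
      have hle : ∀ k : ℕ, ⟪w, ψ (k + M)⟫ ^ 2 ≤ (y ⬝ᵥ y) * (d ^ 2 * γ (k + M) ^ 2) := by
        intro k
        have := st13_coeff_sq_le ψ hΓ y (k + M)
        rw [← hwdef] at this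
        exact this
      calc ∑' k : ℕ, ⟪w, ψ (k + M)⟫ ^ 2
          ≤ ∑' k : ℕ, (y ⬝ᵥ y) * (d ^ 2 * γ (k + M) ^ 2) := Summable.tsum_le_tsum hle hsum1 hsum2
      _ = (y ⬝ᵥ y) * (d ^ 2 * ∑' k : ℕ, γ (k + M) ^ 2) := by
          rw [tsum_mul_left, tsum_mul_left]
    have hyy := st13_dot_self_nonneg y
    have htail2 : (y ⬝ᵥ y) * (d ^ 2 * ∑' k : ℕ, γ (k + M) ^ 2) ≤ δ ^ 2 * (y ⬝ᵥ y) := by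
      rw [mul_comm (δ ^ 2)]
      exact mul_le_mul_of_nonneg_left hMtail hyy
    rw [hhead] at hsplit
    linarith
  -- lower sandwich at level M
  have hlow : ∀ y : Fin M → ℝ,
      (d ^ 2)⁻¹ * (∑ j : Fin M, γ (j : ℕ) ^ 2 * y j ^ 2) ≤ ‖Γ (st13_hvec ψ y)‖ ^ 2 := by
    intro y
    have h7 := (hΓ.2.2.2 (st13_hvec ψ y)).1
    have htsum : (∑' j, γ j ^ 2 * ⟪st13_hvec ψ y, ψ j⟫ ^ 2)
        = ∑ j : Fin M, γ (j : ℕ) ^ 2 * y j ^ 2 := by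
      rw [tsum_eq_sum (s := Finset.range M) (by
        intro j hj
        rw [st13_inner_hvec_psi, dif_neg (by simpa using hj)]
        ring)]
      rw [← Fin.sum_univ_eq_sum_range (fun j => γ j ^ 2 * ⟪st13_hvec ψ y, ψ j⟫ ^ 2) M]
      apply Finset.sum_congr rfl
      intro j _
      rw [st13_inner_hvec_psi, dif_pos j.isLt]
    rwa [htsum] at h7
  -- the quadratic comparison of squares
  have hsq : ∀ y : Fin M → ℝ, y ⬝ᵥ ((D * D) *ᵥ y)
      ≤ y ⬝ᵥ (((A + δ • (1 : Matrix (Fin M) (Fin M) ℝ)) *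
          (A + δ • (1 : Matrix (Fin M) (Fin M) ℝ))) *ᵥ y) := by
    intro y
    have hlhs : y ⬝ᵥ ((D * D) *ᵥ y) = (d ^ 2)⁻¹ * (∑ j : Fin M, γ (j : ℕ) ^ 2 * y j ^ 2) := by
      rw [hDdef, Matrix.diagonal_mul_diagonal, st13_dot_diag, Finset.mul_sum]
      apply Finset.sum_congr rfl
      intro j _
      have hDvj : Dv j = γ (j : ℕ) / d := rfl
      rw [hDvj, div_mul_div_comm, div_eq_inv_mul, ← sq, ← sq, mul_assoc]
    have hrhs : y ⬝ᵥ (((A + δ • (1 : Matrix (Fin M) (Fin M) ℝ)) *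
        (A + δ • (1 : Matrix (Fin M) (Fin M) ℝ))) *ᵥ y)
        = (A *ᵥ y) ⬝ᵥ (A *ᵥ y) + 2 * δ * (y ⬝ᵥ (A *ᵥ y)) + δ ^ 2 * (y ⬝ᵥ y) := by
      rw [← Matrix.mulVec_mulVec, st13_herm_dot hA1herm, hshift]
      have hc : (A *ᵥ y) ⬝ᵥ y = y ⬝ᵥ (A *ᵥ y) := dotProduct_comm _ _
      simp only [add_dotProduct, dotProduct_add, smul_dotProduct,
        dotProduct_smul, smul_eq_mul, hc]
      ring
    have hpos : 0 ≤ y ⬝ᵥ (A *ᵥ y) := by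
      have h8 := hApsd.dotProduct_mulVec_nonneg y
      rwa [st13_star_id] at h8
    have h9 := hnormw y
    have h10 := hlow y
    rw [hlhs, hrhs]
    nlinarith [mul_nonneg hδ0.le hpos]
  have mono := st13_form_mono_of_sq hDpsd hA1psd hsq
  -- padding
  set y : Fin M → ℝ := fun j => if h : (j : ℕ) < m then x ⟨(j : ℕ), h⟩ else 0 with hydef
  set F : ℕ → H := fun j => (if h : j < m then x ⟨j, h⟩ else 0) • ψ j with hFdef
  have hhvy : st13_hvec ψ y = ∑ j ∈ Finset.range M, F j := by
    rw [st13_hvec, ← Fin.sum_univ_eq_sum_range F M]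
  have hhvx : st13_hvec ψ x = ∑ j ∈ Finset.range m, F j := by
    rw [st13_hvec, ← Fin.sum_univ_eq_sum_range F m]
    apply Finset.sum_congr rfl
    intro j _
    show x j • ψ (j : ℕ) = (if h : (j:ℕ) < m then x ⟨(j:ℕ), h⟩ else 0) • ψ (j : ℕ)
    rw [dif_pos j.isLt]
  have hhv : st13_hvec ψ y = st13_hvec ψ x := by
    rw [hhvy, hhvx]
    symm
    apply Finset.sum_subset (Finset.range_subset_range.mpr hMm)
    intro j _ hj
    rw [hFdef]
    show (if h : j < m then x ⟨j, h⟩ else 0) • ψ j = 0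
    rw [dif_neg (by simpa using hj), zero_smul]
  have hyy : y ⬝ᵥ y = s := by
    rw [hsdef, ← st13_inner_hvec_hvec ψ y, ← st13_inner_hvec_hvec ψ x, hhv]
  have hyA : y ⬝ᵥ (A *ᵥ y) = x ⬝ᵥ (opMat ψ Γ m *ᵥ x) := by
    rw [hAdef, st13_quad_eq, st13_quad_eq, hhv]
  have hyD : γ (m - 1) / d * s ≤ y ⬝ᵥ (D *ᵥ y) := by
    rw [hDdef, st13_dot_diag, ← hyy, dotProduct, Finset.mul_sum]
    apply Finset.sum_le_sum
    intro j _
    by_cases hj : (j : ℕ) < m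
    · have hmono : γ (m - 1) ≤ γ (j : ℕ) := hγanti (by omega)
      have hDvj : Dv j = γ (j : ℕ) / d := rfl
      rw [hDvj]
      have hyj : 0 ≤ y j * y j := mul_self_nonneg _
      have hdd : γ (m - 1) / d ≤ γ (j : ℕ) / d := by gcongr
      nlinarith [hdd, hyj]
    · have hyj : y j = 0 := by rw [hydef]; exact dif_neg hj
      rw [hyj]
      simp
  have hfin := mono y
  rw [hshift, dotProduct_add, dotProduct_smul, smul_eq_mul, hyy, hyA] at hfin
  have hδs : δ * s ≤ ε := by
    rw [hδdef, div_mul_eq_mul_div, div_le_iff₀ (by linarith)]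
    nlinarith
  linarith [hyD, hfin, hδs]

end Aux13f

section Aux13g

lemma st13_dot_self_pos {m : ℕ} {x : Fin m → ℝ} (hx : x ≠ 0) : 0 < x ⬝ᵥ x := by
  rcases Function.ne_iff.mp hx with ⟨i, hi⟩
  have h1 : (0:ℝ) < x i * x i := by
    rcases lt_or_gt_of_ne (show x i ≠ 0 by simpa using hi) with h | h <;> nlinarith
  have h2 : x i * x i ≤ x ⬝ᵥ x :=
    Finset.single_le_sum (fun j _ => mul_self_nonneg (x j)) (Finset.mem_univ i)
  linarith

lemma st13_opMat_posdef (ψ : HilbertBasis ℕ ℝ H) {γ : ℕ → ℝ} {d : ℝ} (hd : 1 ≤ d)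
    (hγ1 : γ 0 = 1) (hγpos : ∀ j, 0 < γ j) (hγanti : Antitone γ) (hγsum : Summable γ)
    {Γ : H →L[ℝ] H} (hΓ : memG ψ γ d Γ) {m : ℕ} (hm : 1 ≤ m) :
    (opMat ψ Γ m).PosDef := by
  refine Matrix.PosDef.of_dotProduct_mulVec_pos (st13_opMat_herm ψ hΓ.1 m) fun x hx => ?_
  rw [st13_star_id]
  have h1 := st13_opMat_form_lower ψ hd hγ1 hγpos hγanti hγsum hΓ hm x
  have h2 : 0 < γ (m - 1) / d := div_pos (hγpos _) (lt_of_lt_of_le one_pos hd)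
  have h3 := st13_dot_self_pos hx
  nlinarith

lemma st13_opMat_isUnit_det (ψ : HilbertBasis ℕ ℝ H) {γ : ℕ → ℝ} {d : ℝ} (hd : 1 ≤ d)
    (hγ1 : γ 0 = 1) (hγpos : ∀ j, 0 < γ j) (hγanti : Antitone γ) (hγsum : Summable γ)
    {Γ : H →L[ℝ] H} (hΓ : memG ψ γ d Γ) {m : ℕ} (hm : 1 ≤ m) :
    IsUnit (opMat ψ Γ m).det :=
  (st13_opMat_posdef ψ hd hγ1 hγpos hγanti hγsum hΓ hm).det_pos.ne'.isUnit

lemma st13_specNorm_opMat_inv_le (ψ : HilbertBasis ℕ ℝ H) {γ : ℕ → ℝ} {d : ℝ} (hd : 1 ≤ d)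
    (hγ1 : γ 0 = 1) (hγpos : ∀ j, 0 < γ j) (hγanti : Antitone γ) (hγsum : Summable γ)
    {Γ : H →L[ℝ] H} (hΓ : memG ψ γ d Γ) {m : ℕ} (hm : 1 ≤ m) :
    specNorm (opMat ψ Γ m)⁻¹ ≤ d / γ (m - 1) := by
  have h1 := st13_specNorm_inv_le_of_form
    (st13_opMat_isUnit_det ψ hd hγ1 hγpos hγanti hγsum hΓ hm)
    (div_pos (hγpos (m - 1)) (lt_of_lt_of_le one_pos hd))
    (st13_opMat_form_lower ψ hd hγ1 hγpos hγanti hγsum hΓ hm)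
  rwa [inv_div] at h1

lemma st13_le_specNorm_opMat_inv (ψ : HilbertBasis ℕ ℝ H) {γ : ℕ → ℝ} {d : ℝ} (hd : 1 ≤ d)
    (hγ1 : γ 0 = 1) (hγpos : ∀ j, 0 < γ j) (hγanti : Antitone γ) (hγsum : Summable γ)
    {Γ : H →L[ℝ] H} (hΓ : memG ψ γ d Γ) {m : ℕ} (hm : 1 ≤ m) :
    (d * γ (m - 1))⁻¹ ≤ specNorm (opMat ψ Γ m)⁻¹ := by
  have hd0 : (0:ℝ) < d := lt_of_lt_of_le one_pos hd
  have ht : (0:ℝ) < d * γ (m - 1) := mul_pos hd0 (hγpos _)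
  refine st13_le_specNorm_inv (st13_opMat_psd ψ hΓ m)
    (st13_opMat_isUnit_det ψ hd hγ1 hγpos hγanti hγsum hΓ hm) ⟨m - 1, by omega⟩ ht ?_
  have hentry : opMat ψ Γ m ⟨m - 1, by omega⟩ ⟨m - 1, by omega⟩ = ⟪ψ (m-1), Γ (ψ (m-1))⟫ := rfl
  rw [hentry]
  have h1 : ⟪ψ (m-1), Γ (ψ (m-1))⟫ ≤ ‖ψ (m-1)‖ * ‖Γ (ψ (m-1))‖ :=
    real_inner_le_norm _ _
  have h2 : ‖ψ (m-1)‖ = 1 := ψ.orthonormal.1 (m-1)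
  have h3 := st13_norm_Gpsi_sq_le ψ hΓ (m-1)
  have h4 : ‖Γ (ψ (m-1))‖ ≤ d * γ (m-1) := by
    nlinarith [norm_nonneg (Γ (ψ (m-1))), mul_pos hd0 (hγpos (m-1))]
  calc ⟪ψ (m-1), Γ (ψ (m-1))⟫ ≤ ‖ψ (m-1)‖ * ‖Γ (ψ (m-1))‖ := h1
  _ = ‖Γ (ψ (m-1))‖ := by rw [h2, one_mul]
  _ ≤ d * γ (m-1) := h4

end Aux13g

lemma st13_ite_sInf_le {S T : Set ℕ} {L : ℕ} (hST : S ⊆ T) (hT : ∀ k ∈ T, k ≤ L) :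
    (if T.Nonempty then sInf T - 1 else L) ≤ (if S.Nonempty then sInf S - 1 else L) := by
  by_cases hS : S.Nonempty
  · have hTne : T.Nonempty := hS.mono hST
    rw [if_pos hTne, if_pos hS]
    exact Nat.sub_le_sub_right (Nat.sInf_le (hST (Nat.sInf_mem hS))) 1
  · rw [if_neg hS]
    by_cases hTne : T.Nonempty
    · rw [if_pos hTne]
      exact le_trans (Nat.sub_le _ _) (hT _ (Nat.sInf_mem hTne))
    · rw [if_neg hTne]



/-- Lemma A.2: on the event where all empirical inverse spectral norms are
comparable to the true ones (within a factor 4), one has `M_n^- ≤ M̂_n ≤ M_n^+`. -/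
theorem stmt_13 (ψ : HilbertBasis ℕ ℝ H) (γ : ℕ → ℝ) (d : ℝ) (hd : 1 ≤ d)
    (hγ1 : γ 0 = 1) (hγpos : ∀ j, 0 < γ j) (hγanti : Antitone γ)
    (hγ0 : Filter.Tendsto γ Filter.atTop (nhds 0)) (hγsum : Summable γ)
    (β : ℕ → ℝ) (hβ1 : β 0 = 1) (hβmono : Monotone β)
    (hβ0 : Filter.Tendsto (fun j => (β j)⁻¹) Filter.atTop (nhds 0))
    (lc : ℕ → ℝ) (hl1 : lc 0 = 1) (hlβ : Summable (fun j => lc j ^ 2 / β j))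
    (Γ : H →L[ℝ] H) (hΓ : memG ψ γ d Γ)
    {Ω : Type} (n : ℕ) (hn : 1 ≤ n) (X : Fin n → Ω → H) :
    {ω : Ω | ∀ m : ℕ, 1 ≤ m → m ≤ Mln lc n →
        1 / 4 < specNorm (hatGam ψ n X m ω)⁻¹ / specNorm (opMat ψ Γ m)⁻¹ ∧
        specNorm (hatGam ψ n X m ω)⁻¹ / specNorm (opMat ψ Γ m)⁻¹ ≤ 4}
      ⊆ {ω : Ω | Mna lc (fun j => 16 * d ^ 3 / γ j) n ≤ Mhat ψ lc n X ω ∧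
          Mhat ψ lc n X ω ≤ Mna lc (fun j => (4 * d * γ j)⁻¹) n} := by
  intro ω hω
  simp only [Set.mem_setOf_eq] at hω ⊢
  have hd0 : (0:ℝ) < d := lt_of_lt_of_le one_pos hd
  have hfpos : ∀ m : ℕ, 1 ≤ m → (0:ℝ) < ∑ j ∈ Finset.range m, lc j ^ 2 := by
    intro m hm
    have h0 : (0:ℕ) ∈ Finset.range m := by simp; omega
    have h1 : (1:ℝ) ≤ ∑ j ∈ Finset.range m, lc j ^ 2 := by
      calc (1:ℝ) = lc 0 ^ 2 := by rw [hl1]; norm_num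
      _ ≤ ∑ j ∈ Finset.range m, lc j ^ 2 :=
        Finset.single_le_sum (f := fun j => lc j ^ 2) (fun j _ => sq_nonneg _) h0
    linarith
  have hc0 : (0:ℝ) ≤ (n : ℝ) / (1 + Real.log n) := by
    apply div_nonneg (Nat.cast_nonneg n)
    have h2 : (0:ℝ) ≤ Real.log n := Real.log_nonneg (by exact_mod_cast hn)
    linarith
  have key : ∀ m : ℕ, 2 ≤ m → m ≤ Mln lc n →
      IsUnit (hatGam ψ n X m ω).det ∧
      (4 * d * γ (m - 1))⁻¹ < specNorm (hatGam ψ n X m ω)⁻¹ ∧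
      specNorm (hatGam ψ n X m ω)⁻¹ ≤ 16 * d ^ 3 / γ (m - 1) := by
    intro m hm2 hmM
    have hm1 : 1 ≤ m := by omega
    obtain ⟨hlow, hhigh⟩ := hω m hm1 hmM
    have hγm : 0 < γ (m - 1) := hγpos _
    have hs_low := st13_le_specNorm_opMat_inv ψ hd hγ1 hγpos hγanti hγsum hΓ hm1
    have hs_hi := st13_specNorm_opMat_inv_le ψ hd hγ1 hγpos hγanti hγsum hΓ hm1
    have hs0 : 0 < specNorm (opMat ψ Γ m)⁻¹ :=
      lt_of_lt_of_le (by positivity) hs_low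
    have hq_lo : specNorm (opMat ψ Γ m)⁻¹ / 4 < specNorm (hatGam ψ n X m ω)⁻¹ := by
      rw [div_lt_iff₀ (by norm_num : (0:ℝ) < 4)]
      rw [lt_div_iff₀ hs0] at hlow
      linarith
    have hq_hi : specNorm (hatGam ψ n X m ω)⁻¹ ≤ 4 * specNorm (opMat ψ Γ m)⁻¹ := by
      rw [div_le_iff₀ hs0] at hhigh
      linarith
    have hq0 : 0 < specNorm (hatGam ψ n X m ω)⁻¹ :=
      lt_of_le_of_lt (by positivity) hq_lo
    have hdet : IsUnit (hatGam ψ n X m ω).det := by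
      by_contra hdet
      rw [Matrix.nonsing_inv_apply_not_isUnit _ hdet] at hq0
      rw [specNorm, map_zero, norm_zero] at hq0
      exact lt_irrefl 0 hq0
    have h16 : 4 * (d / γ (m - 1)) ≤ 16 * d ^ 3 / γ (m - 1) := by
      rw [div_eq_mul_inv, div_eq_mul_inv]
      have hinv : (0:ℝ) < (γ (m - 1))⁻¹ := by positivity
      nlinarith [mul_nonneg (by nlinarith [hd, hd0, sq_nonneg (d - 1), sq_nonneg (d + 1)] : (0:ℝ) ≤ 16 * d ^ 3 - 4 * d) hinv.le]
    refine ⟨hdet, ?_, ?_⟩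
    · have heq : (4 * d * γ (m - 1))⁻¹ = (d * γ (m - 1))⁻¹ / 4 := by
        rw [mul_assoc, mul_inv]
        ring
      rw [heq]
      linarith
    · linarith
  have hplus_sub : {m : ℕ | 2 ≤ m ∧ m ≤ Mln lc n ∧
        (n : ℝ) / (1 + Real.log n) <
          (fun j => (4 * d * γ j)⁻¹) (m - 1) * ∑ j ∈ Finset.range m, lc j ^ 2}
      ⊆ {m : ℕ | 2 ≤ m ∧ m ≤ Mln lc n ∧
        ENNReal.ofReal ((n : ℝ) / (1 + Real.log n)) <
          invNormE (hatGam ψ n X m ω) * ENNReal.ofReal (∑ j ∈ Finset.range m, lc j ^ 2)} := by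
    rintro m ⟨hm2, hmM, hlt⟩
    obtain ⟨hdet, hlo, _⟩ := key m hm2 hmM
    refine ⟨hm2, hmM, ?_⟩
    have hq_nonneg : (0:ℝ) ≤ specNorm (hatGam ψ n X m ω)⁻¹ := norm_nonneg _
    rw [invNormE, if_pos hdet, ← ENNReal.ofReal_mul hq_nonneg]
    refine (ENNReal.ofReal_lt_ofReal_iff_of_nonneg hc0).mpr ?_
    have hf0 := hfpos m (by omega)
    calc (n : ℝ) / (1 + Real.log n)
        < (4 * d * γ (m - 1))⁻¹ * ∑ j ∈ Finset.range m, lc j ^ 2 := hlt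
    _ < specNorm (hatGam ψ n X m ω)⁻¹ * ∑ j ∈ Finset.range m, lc j ^ 2 :=
        mul_lt_mul_of_pos_right hlo hf0
  have hminus_sub : {m : ℕ | 2 ≤ m ∧ m ≤ Mln lc n ∧
        ENNReal.ofReal ((n : ℝ) / (1 + Real.log n)) <
          invNormE (hatGam ψ n X m ω) * ENNReal.ofReal (∑ j ∈ Finset.range m, lc j ^ 2)}
      ⊆ {m : ℕ | 2 ≤ m ∧ m ≤ Mln lc n ∧
        (n : ℝ) / (1 + Real.log n) <
          (fun j => 16 * d ^ 3 / γ j) (m - 1) * ∑ j ∈ Finset.range m, lc j ^ 2} := by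
    rintro m ⟨hm2, hmM, hlt⟩
    obtain ⟨hdet, _, hhi⟩ := key m hm2 hmM
    refine ⟨hm2, hmM, ?_⟩
    have hq_nonneg : (0:ℝ) ≤ specNorm (hatGam ψ n X m ω)⁻¹ := norm_nonneg _
    rw [invNormE, if_pos hdet, ← ENNReal.ofReal_mul hq_nonneg] at hlt
    have hlt2 := (ENNReal.ofReal_lt_ofReal_iff_of_nonneg hc0).mp hlt
    have hf0 := hfpos m (by omega)
    show (n : ℝ) / (1 + Real.log n) < (16 * d ^ 3 / γ (m - 1)) * ∑ j ∈ Finset.range m, lc j ^ 2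
    calc (n : ℝ) / (1 + Real.log n)
        < specNorm (hatGam ψ n X m ω)⁻¹ * ∑ j ∈ Finset.range m, lc j ^ 2 := hlt2
    _ ≤ (16 * d ^ 3 / γ (m - 1)) * ∑ j ∈ Finset.range m, lc j ^ 2 :=
        mul_le_mul_of_nonneg_right hhi hf0.le
  constructor
  · exact st13_ite_sInf_le hminus_sub (fun k hk => hk.2.1)
  · exact st13_ite_sInf_le hplus_sub (fun k hk => hk.2.1)


end
end

section
/- Let U_1,…,U_n be independent standard normally distributed real random variables. Then for all η > 0: P( |n^{−1/2} Σ_{i=1}^n (U_i² − 1)| ≥ η ) ≤ 2·exp( −η² / (8(1 + η·n^{−1/2})) ). -/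
/-!
The moment generating function of `U² - 1` for a standard Gaussian `U` is
`e^{-t} (1 - 2t)^{-1/2}`, and `y ≤ e^{y - 1}` applied at `y = (1 - 2t)⁻¹` bounds it by
`exp (2t² / (1 - 2t))` for all `t < 1/2`. By independence the sum `S` of the `n` variables has
`mgf S (±t) ≤ exp (2nt² / (1 - 2t))` for `0 ≤ t < 1/2`, so the two Chernoff bounds give
`P(ε ≤ |S|) ≤ 2 exp (-tε + 2nt² / (1 - 2t))`. The choice `t = ε / (4(n + ε))` turns the exponent
into `-ε² / (4(2n + ε)) ≤ -ε² / (8(n + ε))`, which for `ε = √n η` is the claimed bound.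
-/

open MeasureTheory ProbabilityTheory Real
open scoped NNReal

lemma mgf_sq_gaussianReal {v : ℝ≥0} (hv : v ≠ 0) {t : ℝ} (ht : 2 * v * t < 1) :
    mgf (fun x ↦ x ^ 2) (gaussianReal 0 v) t = (√(1 - 2 * v * t))⁻¹ := by
  have hv' : (0 : ℝ) < v := by positivity
  have hb : 0 < 1 / (2 * v) - t := by
    rw [sub_pos, lt_div_iff₀ (by positivity)]; linarith
  have hdens : ∀ x : ℝ, gaussianPDFReal 0 v x • rexp (t * x ^ 2)
      = (√(2 * π * v))⁻¹ * rexp (-(1 / (2 * v) - t) * x ^ 2) := fun x ↦ by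
    rw [gaussianPDFReal, smul_eq_mul, mul_assoc, ← exp_add]
    congr 2
    field_simp
    ring
  rw [mgf, integral_gaussianReal_eq_integral_smul hv]
  simp_rw [hdens]
  rw [integral_const_mul, integral_gaussian, ← sqrt_inv, ← sqrt_mul (by positivity), ← sqrt_inv]
  congr 1
  field_simp

lemma inv_sqrt_le_exp (x : ℝ) : (√x)⁻¹ ≤ rexp ((x⁻¹ - 1) / 2) := by
  rw [← sqrt_inv, exp_half]
  exact sqrt_le_sqrt (by linarith [add_one_le_exp (x⁻¹ - 1)])

lemma mgf_sq_sub_one_gaussianReal {t : ℝ} (ht : t < 1 / 2) :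
    mgf (fun x ↦ x ^ 2 - 1) (gaussianReal 0 1) t = rexp (-t) * (√(1 - 2 * t))⁻¹ := by
  have hshift : (fun x : ℝ ↦ x ^ 2 - 1) = fun x ↦ -1 + x ^ 2 := by ext; ring
  rw [hshift, mgf_const_add, mgf_sq_gaussianReal one_ne_zero (by push_cast; linarith),
    NNReal.coe_one, mul_one, mul_neg_one]

lemma mgf_sq_sub_one_gaussianReal_le {t : ℝ} (ht : |t| < 1 / 2) :
    mgf (fun x ↦ x ^ 2 - 1) (gaussianReal 0 1) t ≤ rexp (2 * t ^ 2 / (1 - 2 * |t|)) := by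
  have hpos : 0 < 1 - 2 * t := by linarith [le_abs_self t]
  rw [mgf_sq_sub_one_gaussianReal (lt_of_le_of_lt (le_abs_self t) ht)]
  calc rexp (-t) * (√(1 - 2 * t))⁻¹ ≤ rexp (-t) * rexp (((1 - 2 * t)⁻¹ - 1) / 2) := by
        gcongr; exact inv_sqrt_le_exp _
    _ = rexp (2 * t ^ 2 / (1 - 2 * t)) := by
        rw [← exp_add]
        congr 1
        rw [eq_div_iff hpos.ne']
        linear_combination (1 / 2 : ℝ) * inv_mul_cancel₀ hpos.ne'
    _ ≤ rexp (2 * t ^ 2 / (1 - 2 * |t|)) := by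
        gcongr
        · linarith
        · exact le_abs_self t

variable {Ω : Type*} [MeasurableSpace Ω] {μ : Measure Ω}

lemma measure_abs_ge_le_exp_mul_mgf_add [IsFiniteMeasure μ] {X : Ω → ℝ} (ε : ℝ) {t : ℝ}
    (ht : 0 ≤ t) (h_int : Integrable (fun ω ↦ rexp (t * X ω)) μ)
    (h_int_neg : Integrable (fun ω ↦ rexp (-t * X ω)) μ) :
    μ.real {ω | ε ≤ |X ω|} ≤ rexp (-t * ε) * (mgf X μ t + mgf X μ (-t)) := by
  have hsub : {ω | ε ≤ |X ω|} ⊆ {ω | ε ≤ X ω} ∪ {ω | X ω ≤ -ε} := fun ω (hω : ε ≤ |X ω|) ↦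
    (le_abs'.mp hω).symm
  calc μ.real {ω | ε ≤ |X ω|} ≤ μ.real {ω | ε ≤ X ω} + μ.real {ω | X ω ≤ -ε} :=
        (measureReal_mono hsub).trans (measureReal_union_le _ _)
    _ ≤ rexp (-t * ε) * mgf X μ t + rexp (-(-t) * -ε) * mgf X μ (-t) :=
        add_le_add (measure_ge_le_exp_mul_mgf ε ht h_int)
          (measure_le_le_exp_mul_mgf (-ε) (neg_nonpos.mpr ht) h_int_neg)
    _ = rexp (-t * ε) * (mgf X μ t + mgf X μ (-t)) := by ring_nf

section SumOfSquares

variable {ι : Type*} [Fintype ι] {U : ι → Ω → ℝ}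

lemma mgf_sum_sq_sub_one (hmeas : ∀ i, Measurable (U i)) (hindep : iIndepFun U μ)
    (hgauss : ∀ i, μ.map (U i) = gaussianReal 0 1) (t : ℝ) :
    mgf (fun ω ↦ ∑ i, (U i ω ^ 2 - 1)) μ t
      = mgf (fun x ↦ x ^ 2 - 1) (gaussianReal 0 1) t ^ Fintype.card ι := by
  have hcomp : iIndepFun (fun i ω ↦ U i ω ^ 2 - 1) μ :=
    hindep.comp (fun _ x ↦ x ^ 2 - 1) (fun _ ↦ by fun_prop)
  have hsum : (fun ω ↦ ∑ i, (U i ω ^ 2 - 1)) = ∑ i, fun ω ↦ U i ω ^ 2 - 1 := by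
    ext ω; simp
  rw [hsum, hcomp.mgf_sum (fun i ↦ by fun_prop), ← Finset.card_univ]
  refine Finset.prod_eq_pow_card fun i _ ↦ ?_
  rw [← hgauss i, mgf_map (hmeas i).aemeasurable (by fun_prop)]
  rfl

lemma measure_abs_sum_sq_sub_one_ge_le (hmeas : ∀ i, Measurable (U i))
    (hindep : iIndepFun U μ) (hgauss : ∀ i, μ.map (U i) = gaussianReal 0 1) (ε : ℝ) {t : ℝ}
    (ht₀ : 0 ≤ t) (ht : t < 1 / 2) :
    μ.real {ω | ε ≤ |∑ i, (U i ω ^ 2 - 1)|}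
      ≤ 2 * rexp (-t * ε + Fintype.card ι * (2 * t ^ 2 / (1 - 2 * t))) := by
  have := hindep.isProbabilityMeasure
  set S : Ω → ℝ := fun ω ↦ ∑ i, (U i ω ^ 2 - 1)
  have hmgf : ∀ s, |s| = t →
      0 < mgf S μ s ∧ mgf S μ s ≤ rexp (Fintype.card ι * (2 * t ^ 2 / (1 - 2 * t))) := by
    intro s hs
    have hs' : |s| < 1 / 2 := hs ▸ ht
    have hbound := mgf_sq_sub_one_gaussianReal_le hs'
    rw [← sq_abs s, hs] at hbound
    rw [mgf_sum_sq_sub_one hmeas hindep hgauss, exp_nat_mul]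
    refine ⟨pow_pos ?_ _, pow_le_pow_left₀ mgf_nonneg hbound _⟩
    rw [mgf_sq_sub_one_gaussianReal (abs_lt.mp hs').2]
    have : 0 < 1 - 2 * s := by linarith [(abs_lt.mp hs').2]
    positivity
  have hint : ∀ s, |s| = t → Integrable (fun ω ↦ rexp (s * S ω)) μ := fun s hs ↦
    mgf_pos_iff.mp (hmgf s hs).1
  have habs_t : |t| = t := abs_of_nonneg ht₀
  have habs_neg_t : |-t| = t := by rw [abs_neg, habs_t]
  calc μ.real {ω | ε ≤ |S ω|} ≤ rexp (-t * ε) * (mgf S μ t + mgf S μ (-t)) :=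
        measure_abs_ge_le_exp_mul_mgf_add ε ht₀ (hint t habs_t) (hint (-t) habs_neg_t)
    _ ≤ rexp (-t * ε) * (rexp (Fintype.card ι * (2 * t ^ 2 / (1 - 2 * t)))
          + rexp (Fintype.card ι * (2 * t ^ 2 / (1 - 2 * t)))) := by
        gcongr
        exacts [(hmgf t habs_t).2, (hmgf (-t) habs_neg_t).2]
    _ = 2 * rexp (-t * ε + Fintype.card ι * (2 * t ^ 2 / (1 - 2 * t))) := by
        rw [exp_add]; ring

lemma measure_abs_sum_sq_sub_one_ge_le_two_mul_exp (hmeas : ∀ i, Measurable (U i))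
    (hindep : iIndepFun U μ) (hgauss : ∀ i, μ.map (U i) = gaussianReal 0 1) {ε : ℝ}
    (hε : 0 < ε) :
    μ.real {ω | ε ≤ |∑ i, (U i ω ^ 2 - 1)|}
      ≤ 2 * rexp (-ε ^ 2 / (8 * (Fintype.card ι + ε))) := by
  set n : ℝ := (Fintype.card ι : ℝ)
  have hn : 0 ≤ n := Nat.cast_nonneg _
  set t := ε / (4 * (n + ε)) with ht_def
  have ht₀ : 0 ≤ t := by positivity
  have ht : t < 1 / 2 := by rw [div_lt_iff₀ (by positivity)]; linarith
  refine (measure_abs_sum_sq_sub_one_ge_le hmeas hindep hgauss ε ht₀ ht).trans ?_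
  gcongr
  have h2t : 1 - 2 * t = (2 * n + ε) / (2 * (n + ε)) := by
    rw [ht_def]; field_simp; ring
  calc -t * ε + n * (2 * t ^ 2 / (1 - 2 * t)) = -ε ^ 2 / (4 * (2 * n + ε)) := by
        rw [h2t, ht_def]; field_simp; ring
    _ ≤ -ε ^ 2 / (8 * (n + ε)) := by
        rw [neg_div, neg_div, neg_le_neg_iff]
        exact div_le_div_of_nonneg_left (by positivity) (by positivity) (by linarith)

end SumOfSquares

theorem stmt_16_general {Ω : Type} [MeasurableSpace Ω] (P : Measure Ω)
    (n : ℕ) (hn : 1 ≤ n) (U : Fin n → Ω → ℝ)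
    (hmeas : ∀ i, Measurable (U i))
    (hindep : iIndepFun U P)
    (hgauss : ∀ i, Measure.map (U i) P = gaussianReal 0 1)
    (η : ℝ) (hη : 0 < η) :
    (P {ω | η ≤ |(Real.sqrt n)⁻¹ * ∑ i, ((U i ω) ^ 2 - 1)|}).toReal
      ≤ 2 * Real.exp (-(η ^ 2) / (8 * (1 + η * (Real.sqrt n)⁻¹))) := by
  have hsqrt : 0 < √(n : ℝ) := sqrt_pos.mpr (by exact_mod_cast hn)
  have hevent : {ω | η ≤ |(√n)⁻¹ * ∑ i, (U i ω ^ 2 - 1)|}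
      = {ω | √n * η ≤ |∑ i, (U i ω ^ 2 - 1)|} := by
    ext ω
    rw [Set.mem_ofPred_eq, Set.mem_ofPred_eq, abs_mul, abs_inv, abs_of_pos hsqrt, inv_mul_eq_div,
      le_div_iff₀ hsqrt, mul_comm]
  have hexponent : -(√n * η) ^ 2 / (8 * (n + √n * η)) = -η ^ 2 / (8 * (1 + η * (√n)⁻¹)) := by
    field_simp
    rw [mul_add, mul_self_sqrt (Nat.cast_nonneg n)]
  rw [← measureReal_def, hevent, ← hexponent]
  simpa using measure_abs_sum_sq_sub_one_ge_le_two_mul_exp hmeas hindep hgauss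
    (mul_pos hsqrt hη)

/-- Gaussian deviation inequality for the normalized sum of `U_i² − 1`
(inequality (A.5), from Dahlhaus–Polonik). -/
theorem stmt_16 {Ω : Type} [MeasurableSpace Ω] (P : Measure Ω) [IsProbabilityMeasure P]
    (n : ℕ) (hn : 1 ≤ n) (U : Fin n → Ω → ℝ)
    (hmeas : ∀ i, Measurable (U i))
    (hindep : iIndepFun U P)
    (hgauss : ∀ i, Measure.map (U i) P = gaussianReal 0 1)
    (η : ℝ) (hη : 0 < η) :
    (P {ω | η ≤ |(Real.sqrt n)⁻¹ * ∑ i, ((U i ω) ^ 2 - 1)|}).toReal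
      ≤ 2 * Real.exp (-(η ^ 2) / (8 * (1 + η * (Real.sqrt n)⁻¹))) :=
  stmt_16_general P n hn U hmeas hindep hgauss η hη
end

section
/- Let U_1,…,U_n and V_{11},…,V_{n1} be mutually independent standard normally distributed real random variables. Then for all η > 0: P( |n^{−1} Σ_{i=1}^n U_i V_{i1}| ≥ η ) ≤ ((η·n^{1/2} + 2)/(η·n^{1/2})) · exp( −(n/4)·min{η², 1/4} ). -/
open MeasureTheory ProbabilityTheory Real

/-!
For `|t| < 1` each product `U i * V i` has moment generating function `(1 - t²)^(-1/2)`: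
integrating out `V i` leaves `E exp (t² U² / 2)`, and `exp (s x²)` turns the standard normal
density into `(1 - 2s)^(-1/2)` times the `N(0, (1 - 2s)⁻¹)` density. The products are independent,
so the Chernoff bound on both tails gives
`P(|Σ U i * V i| ≥ n η) ≤ 2 exp (-n (t η + log (1 - t²) / 2))`.
With `t = 4η/5` for `η ≤ 5/8` and `t = 1/2` otherwise, the exponent exceeds `min (η², 1/4) / 4`
by at least `log 2 · min (η², 4) / 4`. If `η √n ≤ 2` the prefactor `(η √n + 2) / (η √n)` is already
at least `2`; otherwise `n η² > 4` and the excess absorbs the factor `2`.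
-/

namespace ProbabilityTheory

lemma iIndepFun.prodMk_of_sumElim {Ω ι β : Type*} [MeasurableSpace Ω] [MeasurableSpace β]
    [Fintype ι] {P : Measure Ω} [IsProbabilityMeasure P] {X Y : ι → Ω → β}
    (hX : ∀ i, Measurable (X i)) (hY : ∀ i, Measurable (Y i)) (h : iIndepFun (Sum.elim X Y) P) :
    iIndepFun (fun i ω ↦ (X i ω, Y i ω)) P := by
  have hXY : ∀ j, Measurable (Sum.elim X Y j) := Sum.rec hX hY
  let e := (MeasurableEquiv.sumPiEquivProdPi fun _ : ι ⊕ ι ↦ β).trans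
    (MeasurableEquiv.arrowProdEquivProdArrow β β ι).symm
  have he : (fun ω i ↦ (X i ω, Y i ω)) = e ∘ fun ω j ↦ Sum.elim X Y j ω := rfl
  rw [iIndepFun_iff_map_fun_eq_pi_map fun i ↦ ((hX i).prodMk (hY i)).aemeasurable, he,
    ← Measure.map_map e.measurable (measurable_pi_lambda _ hXY),
    h.map_fun_eq_pi_map fun j ↦ (hXY j).aemeasurable,
    ((measurePreserving_sumPiEquivProdPi _).trans
      (measurePreserving_arrowProdEquivProdArrow β β ι _ _).symm).map_eq]
  congr 1
  funext i
  exact ((indepFun_iff_map_prod_eq_prod_map_map (hX i).aemeasurable (hY i).aemeasurable).mp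
    (h.indepFun Sum.inl_ne_inr)).symm

lemma lintegral_exp_mul_gaussianReal (c : ℝ) :
    ∫⁻ x, ENNReal.ofReal (exp (c * x)) ∂gaussianReal 0 1 = ENNReal.ofReal (exp (c ^ 2 / 2)) := by
  rw [← ofReal_integral_eq_lintegral_ofReal (integrable_exp_mul_gaussianReal c)
    (ae_of_all _ fun _ ↦ (exp_pos _).le),
    show ∫ x, exp (c * x) ∂gaussianReal 0 1 = mgf (fun x ↦ x) (gaussianReal 0 1) c from rfl,
    mgf_fun_id_gaussianReal]
  simp

lemma gaussianPDFReal_mul_exp_mul_sq {s : ℝ} (hs : 0 < 1 - 2 * s) (x : ℝ) :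
    gaussianPDFReal 0 1 x * exp (s * x ^ 2)
      = (√(1 - 2 * s))⁻¹ * gaussianPDFReal 0 (1 - 2 * s)⁻¹.toNNReal x := by
  simp only [gaussianPDFReal, Real.coe_toNNReal _ (inv_nonneg.mpr hs.le), NNReal.coe_one,
    sub_zero, mul_one]
  rw [Real.sqrt_mul (by positivity) (1 - 2 * s)⁻¹, Real.sqrt_inv, Real.sqrt_mul zero_le_two,
    mul_assoc, ← exp_add]
  field_simp
  ring_nf

lemma lintegral_exp_mul_sq_gaussianReal {s : ℝ} (hs : s < 1 / 2) :
    ∫⁻ x, ENNReal.ofReal (exp (s * x ^ 2)) ∂gaussianReal 0 1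
      = ENNReal.ofReal (√(1 - 2 * s))⁻¹ := by
  have hpos : 0 < 1 - 2 * s := by linarith
  have hdens : ∀ x, gaussianPDF 0 1 x * ENNReal.ofReal (exp (s * x ^ 2))
      = ENNReal.ofReal (√(1 - 2 * s))⁻¹ * gaussianPDF 0 (1 - 2 * s)⁻¹.toNNReal x := by
    intro x
    simp only [gaussianPDF, ← ENNReal.ofReal_mul (gaussianPDFReal_nonneg _ _ _),
      ← ENNReal.ofReal_mul (inv_nonneg.mpr (Real.sqrt_nonneg _)),
      gaussianPDFReal_mul_exp_mul_sq hpos]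
  rw [gaussianReal_of_var_ne_zero 0 one_ne_zero,
    lintegral_withDensity_eq_lintegral_mul _ (measurable_gaussianPDF 0 1) (by fun_prop)]
  simp only [Pi.mul_apply, hdens]
  rw [lintegral_const_mul _ (measurable_gaussianPDF _ _),
    lintegral_gaussianPDF_eq_one 0 (by simpa using hpos), mul_one]

lemma lintegral_exp_mul_mul_gaussianReal_prod {t : ℝ} (ht : t ^ 2 < 1) :
    ∫⁻ p, ENNReal.ofReal (exp (t * (p.1 * p.2))) ∂(gaussianReal 0 1).prod (gaussianReal 0 1)
      = ENNReal.ofReal (√(1 - t ^ 2))⁻¹ := by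
  rw [lintegral_prod _ (by fun_prop)]
  have hinner : ∀ x : ℝ, ∫⁻ y, ENNReal.ofReal (exp (t * (x * y))) ∂gaussianReal 0 1
      = ENNReal.ofReal (exp (t ^ 2 / 2 * x ^ 2)) := fun x ↦ by
    simp only [← mul_assoc, lintegral_exp_mul_gaussianReal]
    ring_nf
  simp only [hinner]
  rw [lintegral_exp_mul_sq_gaussianReal (by linarith)]
  ring_nf

lemma IndepFun.integrable_exp_and_mgf_mul_of_gaussianReal {Ω : Type*} [MeasurableSpace Ω]
    {P : Measure Ω} [IsProbabilityMeasure P] {X Y : Ω → ℝ} (hXY : IndepFun X Y P)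
    (hX : Measurable X) (hY : Measurable Y) (hlawX : P.map X = gaussianReal 0 1)
    (hlawY : P.map Y = gaussianReal 0 1) {t : ℝ} (ht : t ^ 2 < 1) :
    Integrable (fun ω ↦ exp (t * (X ω * Y ω))) P ∧
      mgf (fun ω ↦ X ω * Y ω) P t = (√(1 - t ^ 2))⁻¹ := by
  have hlint : ∫⁻ ω, ENNReal.ofReal (exp (t * (X ω * Y ω))) ∂P
      = ENNReal.ofReal (√(1 - t ^ 2))⁻¹ := by
    have hlaw : P.map (fun ω ↦ (X ω, Y ω)) = (gaussianReal 0 1).prod (gaussianReal 0 1) := by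
      rw [(indepFun_iff_map_prod_eq_prod_map_map hX.aemeasurable hY.aemeasurable).mp hXY,
        hlawX, hlawY]
    rw [← lintegral_exp_mul_mul_gaussianReal_prod ht, ← hlaw,
      lintegral_map (by fun_prop) (hX.prodMk hY)]
  have hmeas : AEStronglyMeasurable (fun ω ↦ exp (t * (X ω * Y ω))) P := by fun_prop
  refine ⟨⟨hmeas, ?_⟩, ?_⟩
  · rw [hasFiniteIntegral_iff_ofReal (ae_of_all _ fun _ ↦ (exp_pos _).le), hlint]
    exact ENNReal.ofReal_lt_top
  · rw [mgf, integral_eq_lintegral_of_nonneg_ae (ae_of_all _ fun _ ↦ (exp_pos _).le) hmeas,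
      hlint, ENNReal.toReal_ofReal (by positivity)]

lemma measureReal_le_abs_le_exp_mul_mgf {Ω : Type*} [MeasurableSpace Ω] {μ : Measure Ω}
    [IsFiniteMeasure μ] {X : Ω → ℝ} {t : ℝ} (ε : ℝ) (ht : 0 ≤ t)
    (h_int : Integrable (fun ω ↦ exp (t * X ω)) μ)
    (h_int' : Integrable (fun ω ↦ exp (-t * X ω)) μ) :
    μ.real {ω | ε ≤ |X ω|} ≤ exp (-t * ε) * (mgf X μ t + mgf X μ (-t)) :=
  calc μ.real {ω | ε ≤ |X ω|} ≤ μ.real ({ω | ε ≤ X ω} ∪ {ω | X ω ≤ -ε}) :=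
        measureReal_mono fun ω (hω : ε ≤ |X ω|) ↦
          show ε ≤ X ω ∨ X ω ≤ -ε from (le_abs'.mp hω).symm
    _ ≤ μ.real {ω | ε ≤ X ω} + μ.real {ω | X ω ≤ -ε} := measureReal_union_le _ _
    _ ≤ exp (-t * ε) * mgf X μ t + exp (-t * ε) * mgf X μ (-t) := by
        gcongr
        · exact measure_ge_le_exp_mul_mgf ε ht h_int
        · simpa using measure_le_le_exp_mul_mgf (-ε) (neg_nonpos.mpr ht) h_int'
    _ = exp (-t * ε) * (mgf X μ t + mgf X μ (-t)) := by ring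

lemma measureReal_le_abs_sum_mul_le {Ω ι : Type*} [MeasurableSpace Ω] [Fintype ι]
    {P : Measure Ω} [IsProbabilityMeasure P] {U V : ι → Ω → ℝ}
    (hU : ∀ i, Measurable (U i)) (hV : ∀ i, Measurable (V i))
    (hindep : iIndepFun (Sum.elim U V) P)
    (hgauss : ∀ j, P.map (Sum.elim U V j) = gaussianReal 0 1)
    {t : ℝ} (ht0 : 0 ≤ t) (ht1 : t ^ 2 < 1) (ε : ℝ) :
    P.real {ω | ε ≤ |∑ i, U i ω * V i ω|}
      ≤ 2 * exp (-t * ε) * (√(1 - t ^ 2))⁻¹ ^ Fintype.card ι := by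
  set W : ι → Ω → ℝ := fun i ω ↦ U i ω * V i ω
  have hWmeas : ∀ i, Measurable (W i) := fun i ↦ (hU i).mul (hV i)
  have hW : iIndepFun W P :=
    (hindep.prodMk_of_sumElim hU hV).comp (fun _ p ↦ p.1 * p.2) fun _ ↦ by fun_prop
  have hmgf : ∀ i {s : ℝ}, s ^ 2 < 1 →
      Integrable (fun ω ↦ exp (s * W i ω)) P ∧ mgf (W i) P s = (√(1 - s ^ 2))⁻¹ :=
    fun i _ hs ↦ (hindep.indepFun Sum.inl_ne_inr).integrable_exp_and_mgf_mul_of_gaussianReal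
      (hU i) (hV i) (hgauss (.inl i)) (hgauss (.inr i)) hs
  have hneg : (-t) ^ 2 < 1 := by rwa [neg_sq]
  have hsum : ∀ ω, ∑ i, U i ω * V i ω = (∑ i, W i) ω := fun ω ↦ by simp [W]
  simp only [hsum]
  refine (measureReal_le_abs_le_exp_mul_mgf ε ht0
    (hW.integrable_exp_mul_sum hWmeas fun i _ ↦ (hmgf i ht1).1)
    (hW.integrable_exp_mul_sum hWmeas fun i _ ↦ (hmgf i hneg).1)).trans_eq ?_
  simp only [hW.mgf_sum hWmeas, (hmgf _ ht1).2, (hmgf _ hneg).2, neg_sq, Finset.prod_const,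
    Finset.card_univ]
  ring

end ProbabilityTheory

lemma neg_add_sq_le_log_one_sub {x : ℝ} (h0 : 0 ≤ x) (h1 : x ≤ 1 / 2) :
    -(x + x ^ 2) ≤ log (1 - x) := by
  rw [le_log_iff_exp_le (by linarith), exp_neg, inv_le_iff_one_le_mul₀ (exp_pos _)]
  nlinarith [quadratic_le_exp_of_nonneg (by positivity : 0 ≤ x + x ^ 2)]

lemma exists_chernoff_exponent {η : ℝ} (hη : 0 < η) :
    ∃ t, 0 ≤ t ∧ t < 1 ∧
      min (η ^ 2) (1 / 4) / 4 + log 2 * min (η ^ 2) 4 / 4 ≤ t * η + log (1 - t ^ 2) / 2 := by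
  have hlog2 : log 2 ≤ 0.6931471808 := log_two_lt_d9.le
  by_cases hη58 : η ≤ 5 / 8
  · refine ⟨4 / 5 * η, by positivity, by nlinarith, ?_⟩
    have hlog := neg_add_sq_le_log_one_sub (x := (4 / 5 * η) ^ 2) (by positivity) (by nlinarith)
    have h4 : log 2 * min (η ^ 2) 4 ≤ 0.6931471808 * η ^ 2 :=
      mul_le_mul hlog2 (min_le_left _ _) (by positivity) (by norm_num)
    by_cases hη12 : η ≤ 1 / 2
    · have : min (η ^ 2) (1 / 4) ≤ η ^ 2 := min_le_left _ _
      nlinarith [mul_nonneg (sq_nonneg η) (by nlinarith : (0 : ℝ) ≤ 1 / 4 - η ^ 2)]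
    · have : min (η ^ 2) (1 / 4) ≤ 1 / 4 := min_le_right _ _
      nlinarith [mul_nonneg (by nlinarith : (0 : ℝ) ≤ η ^ 2 - 1 / 4)
        (by nlinarith : (0 : ℝ) ≤ 25 / 64 - η ^ 2)]
  · refine ⟨1 / 2, by norm_num, by norm_num, ?_⟩
    have hlog := neg_add_sq_le_log_one_sub (x := (1 / 2) ^ 2) (by positivity) (by norm_num)
    have : min (η ^ 2) (1 / 4) ≤ 1 / 4 := min_le_right _ _
    by_cases hη2 : η ≤ 2
    · have h4 : log 2 * min (η ^ 2) 4 ≤ 0.6931471808 * η ^ 2 :=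
        mul_le_mul hlog2 (min_le_left _ _) (by positivity) (by norm_num)
      nlinarith [mul_nonneg (by linarith : (0 : ℝ) ≤ η - 5 / 8) (by linarith : (0 : ℝ) ≤ 2 - η)]
    · have h4 : log 2 * min (η ^ 2) 4 ≤ 0.6931471808 * 4 :=
        mul_le_mul hlog2 (min_le_right _ _) (by positivity) (by norm_num)
      linarith

lemma two_mul_exp_neg_le_div {a x : ℝ} (ha : 0 < a) (hx : 0 ≤ x) (h : 2 < a → log 2 ≤ x) :
    2 * exp (-x) ≤ (a + 2) / a := by
  rcases le_or_gt a 2 with ha2 | ha2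
  · calc 2 * exp (-x) ≤ 2 * 1 := by gcongr; simpa using hx
      _ ≤ (a + 2) / a := by rw [le_div_iff₀ ha]; linarith
  · calc 2 * exp (-x) ≤ 2 * exp (-log 2) := by gcongr; exact h ha2
      _ = 1 := by rw [exp_neg, exp_log two_pos]; norm_num
      _ ≤ (a + 2) / a := by rw [le_div_iff₀ ha]; linarith

lemma two_mul_exp_mul_pow_le {n : ℕ} (hn : 1 ≤ n) {η t : ℝ} (hη : 0 < η) (ht : t ^ 2 < 1)
    (hrate : min (η ^ 2) (1 / 4) / 4 + log 2 * min (η ^ 2) 4 / 4 ≤ t * η + log (1 - t ^ 2) / 2) :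
    2 * exp (-t * (n * η)) * (√(1 - t ^ 2))⁻¹ ^ n
      ≤ (η * √n + 2) / (η * √n) * exp (-(n / 4) * min (η ^ 2) (1 / 4)) := by
  set m := min (η ^ 2) (1 / 4)
  set excess := t * η + log (1 - t ^ 2) / 2 - m / 4 with hexcess_def
  have hn0 : (0 : ℝ) < n := by exact_mod_cast hn
  have hpow : (√(1 - t ^ 2))⁻¹ ^ n = exp (-(n * (log (1 - t ^ 2) / 2))) := by
    rw [← exp_log (by positivity : 0 < (√(1 - t ^ 2))⁻¹), ← exp_nat_mul, log_inv,
      log_sqrt (by linarith)]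
    ring_nf
  have hsplit : 2 * exp (-t * (n * η)) * (√(1 - t ^ 2))⁻¹ ^ n
      = 2 * exp (-(n * excess)) * exp (-(n / 4) * m) := by
    rw [hpow, mul_assoc, mul_assoc, ← exp_add, ← exp_add]
    congr 2
    ring
  have hmin : 0 < min (η ^ 2) 4 := lt_min (by positivity) (by norm_num)
  have hexcess : log 2 * min (η ^ 2) 4 / 4 ≤ excess := by linarith
  have hexcess0 : 0 ≤ excess := le_trans (by positivity) hexcess
  rw [hsplit]
  gcongr
  refine two_mul_exp_neg_le_div (by positivity) (mul_nonneg hn0.le hexcess0) fun ha ↦ ?_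
  have hlarge : 4 ≤ n * min (η ^ 2) 4 := by
    have : 4 < η ^ 2 * n := by
      rw [← sq_sqrt hn0.le, ← mul_pow]; nlinarith
    rw [mul_min_of_nonneg _ _ hn0.le]
    exact le_min (by linarith) (by linarith [show (1 : ℝ) ≤ n by exact_mod_cast hn])
  calc log 2 = log 2 * 4 / 4 := by ring
    _ ≤ log 2 * (n * min (η ^ 2) 4) / 4 := by gcongr
    _ = n * (log 2 * min (η ^ 2) 4 / 4) := by ring
    _ ≤ n * excess := by gcongr

/-- Gaussian deviation inequality for the bilinear average `n⁻¹ Σ U_i V_i`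
(inequality (A.6)); `Sum.elim U V` bundles the `2n` mutually independent
standard Gaussian variables. -/
theorem stmt_17 {Ω : Type} [MeasurableSpace Ω] (P : Measure Ω) [IsProbabilityMeasure P]
    (n : ℕ) (hn : 1 ≤ n) (U V : Fin n → Ω → ℝ)
    (hmeasU : ∀ i, Measurable (U i)) (hmeasV : ∀ i, Measurable (V i))
    (hindep : iIndepFun (Sum.elim U V) P)
    (hgauss : ∀ i : Fin n ⊕ Fin n, Measure.map (Sum.elim U V i) P = gaussianReal 0 1)
    (η : ℝ) (hη : 0 < η) :
    (P {ω | η ≤ |(n : ℝ)⁻¹ * ∑ i, U i ω * V i ω|}).toReal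
      ≤ ((η * Real.sqrt n + 2) / (η * Real.sqrt n))
          * Real.exp (-((n : ℝ) / 4) * min (η ^ 2) (1 / 4)) := by
  obtain ⟨t, ht0, ht1, hrate⟩ := exists_chernoff_exponent hη
  have ht : t ^ 2 < 1 := by nlinarith
  have hn0 : (0 : ℝ) < n := by exact_mod_cast hn
  have hset : {ω | η ≤ |(n : ℝ)⁻¹ * ∑ i, U i ω * V i ω|}
      = {ω | n * η ≤ |∑ i, U i ω * V i ω|} := by
    ext ω
    rw [Set.mem_ofPred_eq, Set.mem_ofPred_eq, abs_mul, abs_inv, Nat.abs_cast, le_inv_mul_iff₀ hn0]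
  calc (P {ω | η ≤ |(n : ℝ)⁻¹ * ∑ i, U i ω * V i ω|}).toReal
      = P.real {ω | n * η ≤ |∑ i, U i ω * V i ω|} := by rw [hset, measureReal_def]
    _ ≤ 2 * exp (-t * (n * η)) * (√(1 - t ^ 2))⁻¹ ^ n := by
      simpa using measureReal_le_abs_sum_mul_le hmeasU hmeasV hindep hgauss ht0 ht (n * η)
    _ ≤ _ := two_mul_exp_mul_pow_le hn hη ht hrate
end
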